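/- arXiv:1503.04240 — 6 statements merged into one kernel-verified Lean document; each statement's English description precedes it below -/
import Mathlib

section
/- The Möbius function of the partition lattice of an n-element set satisfies μ(0̂, 1̂) = (-1)^{n-1} (n-1)!. -/
open Finset Polynomial

instance setoidFiniteAux {α : Type*} [Finite α] : Finite (Setoid α) :=
  Finite.of_injective (fun s : Setoid α => s.r) fun a b h => by
    cases a; cases b; cases h; rfl

lemma descPochhammer_eval_neg_one_aux (m : ℕ) :
    (descPochhammer ℤ m).eval (-1) = (-1) ^ m * (m.factorial : ℤ) := by
  induction m with
  | zero => simp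
  | succ k ih =>
    rw [descPochhammer_succ_eval, ih]
    push_cast [Nat.factorial_succ]
    ring

lemma descPochhammer_coeff_one_aux (m : ℕ) :
    (descPochhammer ℤ (m + 1)).coeff 1 = (-1) ^ m * (m.factorial : ℤ) := by
  rw [descPochhammer_succ_left, coeff_X_mul, coeff_zero_eq_eval_zero, eval_comp]
  have h : ((X : ℤ[X]) - 1).eval 0 = -1 := by simp
  rw [h, descPochhammer_eval_neg_one_aux]

/-- The Möbius function of the partition lattice of an `n`-element set satisfies
`μ(0̂, 1̂) = (-1)^(n-1) (n-1)!`. Set partitions of `Fin n` are encoded as setoids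
(equivalence relations), ordered so that `⊥` is the partition into singletons and
`⊤` is the one-block partition. -/
theorem mobius_partition_lattice (n : ℕ) (hn : 1 ≤ n)
    (mu : Setoid (Fin n) → Setoid (Fin n) → ℤ)
    (hmu_refl : ∀ x, mu x x = 1)
    (hmu_rec : ∀ x y, x < y →
      mu x y = -∑ᶠ z ∈ {z : Setoid (Fin n) | x ≤ z ∧ z < y}, mu x z) :
    mu ⊥ ⊤ = (-1) ^ (n - 1) * (Nat.factorial (n - 1) : ℤ) := by
  classical
  letI : Fintype (Setoid (Fin n)) := Fintype.ofFinite _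
  -- Step 1: the defining recursion, summed.
  have hsum : ∀ π : Setoid (Fin n),
      ∑ σ ∈ univ.filter (· ≤ π), mu ⊥ σ = if π = ⊥ then 1 else 0 := by
    intro π
    by_cases hπ : π = ⊥
    · subst hπ
      have hfil : univ.filter (· ≤ (⊥ : Setoid (Fin n))) = {⊥} := by
        ext σ; simp [le_bot_iff]
      rw [hfil, if_pos rfl, Finset.sum_singleton, hmu_refl]
    · have hlt : (⊥ : Setoid (Fin n)) < π := bot_lt_iff_ne_bot.2 hπ
      have hrec := hmu_rec ⊥ π hlt
      have hset : {z : Setoid (Fin n) | ⊥ ≤ z ∧ z < π}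
          = ↑(univ.filter (· < π)) := by
        ext z; simp [bot_le]
      rw [hset, finsum_mem_coe_finset] at hrec
      have hins : univ.filter (· ≤ π) = insert π (univ.filter (· < π)) := by
        ext σ
        simp only [mem_filter, mem_univ, true_and, mem_insert]
        constructor
        · intro h
          rcases eq_or_lt_of_le h with h | h
          · exact Or.inl h
          · exact Or.inr h
        · rintro (rfl | h)
          · exact le_rfl
          · exact le_of_lt h
      have hnotmem : π ∉ univ.filter (· < π) := by simp
      rw [hins, Finset.sum_insert hnotmem, if_neg hπ, hrec]
      exact neg_add_cancel _
  -- Step 2: counting colorings compatible with a partition.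
  have hcount : ∀ (t : ℕ) (σ : Setoid (Fin n)),
      (univ.filter fun g : Fin n → Fin t => σ ≤ Setoid.ker g).card
        = t ^ Nat.card (Quotient σ) := by
    intro t σ
    have h1 : (univ.filter fun g : Fin n → Fin t => σ ≤ Setoid.ker g).card
        = Nat.card {g : Fin n → Fin t // σ ≤ Setoid.ker g} := by
      rw [Nat.card_eq_fintype_card, Fintype.card_subtype]
    rw [h1, Nat.card_congr (Setoid.liftEquiv σ), Nat.card_fun, Nat.card_eq_fintype_card,
      Fintype.card_fin]
  -- Step 3: counting injections.
  have hinj : ∀ t : ℕ,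
      (univ.filter fun g : Fin n → Fin t => Setoid.ker g = ⊥).card
        = Nat.descFactorial t n := by
    intro t
    have h2 : (univ.filter fun g : Fin n → Fin t => Setoid.ker g = ⊥)
        = univ.filter fun g => Function.Injective g := by
      ext g; simp [← Setoid.injective_iff_ker_bot]
    rw [h2, ← Fintype.card_subtype,
      Fintype.card_congr (Equiv.subtypeInjectiveEquivEmbedding (Fin n) (Fin t)),
      Fintype.card_embedding_eq, Fintype.card_fin, Fintype.card_fin]
  -- Step 4: the key polynomial identity evaluated at naturals.
  have key : ∀ t : ℕ,
      ∑ σ : Setoid (Fin n), mu ⊥ σ * (t : ℤ) ^ Nat.card (Quotient σ)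
        = (Nat.descFactorial t n : ℤ) := by
    intro t
    calc ∑ σ : Setoid (Fin n), mu ⊥ σ * (t : ℤ) ^ Nat.card (Quotient σ)
        = ∑ σ : Setoid (Fin n), mu ⊥ σ *
            ((univ.filter fun g : Fin n → Fin t => σ ≤ Setoid.ker g).card : ℤ) := by
          refine Finset.sum_congr rfl fun σ _ => ?_
          rw [hcount t σ]; push_cast; ring
      _ = ∑ σ : Setoid (Fin n), ∑ g : Fin n → Fin t,
            if σ ≤ Setoid.ker g then mu ⊥ σ else 0 := by
          refine Finset.sum_congr rfl fun σ _ => ?_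
          rw [← Finset.sum_filter, Finset.sum_const, nsmul_eq_mul, mul_comm]
      _ = ∑ g : Fin n → Fin t, ∑ σ : Setoid (Fin n),
            if σ ≤ Setoid.ker g then mu ⊥ σ else 0 := Finset.sum_comm
      _ = ∑ g : Fin n → Fin t, if Setoid.ker g = ⊥ then (1 : ℤ) else 0 := by
          refine Finset.sum_congr rfl fun g _ => ?_
          rw [← Finset.sum_filter]
          exact hsum (Setoid.ker g)
      _ = ((univ.filter fun g : Fin n → Fin t => Setoid.ker g = ⊥).card : ℤ) := by
          rw [Finset.sum_boole]
      _ = (Nat.descFactorial t n : ℤ) := by rw [hinj t]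
  -- Step 5: identify polynomials.
  set P : ℤ[X] := ∑ σ : Setoid (Fin n), C (mu ⊥ σ) * X ^ Nat.card (Quotient σ) with hP
  have hPeval : ∀ t : ℕ, P.eval (t : ℤ) = (descPochhammer ℤ n).eval (t : ℤ) := by
    intro t
    rw [descPochhammer_eval_eq_descFactorial, hP, eval_finset_sum]
    simp only [eval_mul, eval_pow, eval_C, eval_X]
    exact key t
  have hPQ : P = descPochhammer ℤ n := by
    apply Polynomial.eq_of_infinite_eval_eq
    apply Set.infinite_of_injective_forall_mem (f := fun t : ℕ => (t : ℤ))
      Nat.cast_injective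
    intro t
    exact hPeval t
  -- Step 6: only `⊤` has one block.
  have hctop : ∀ σ : Setoid (Fin n), Nat.card (Quotient σ) = 1 ↔ σ = ⊤ := by
    intro σ
    rw [Nat.card_eq_one_iff_unique]
    constructor
    · rintro ⟨hsub, -⟩
      refine Setoid.eq_top_iff.2 fun x y => ?_
      exact Quotient.exact (Subsingleton.elim (Quotient.mk σ x) (Quotient.mk σ y))
    · rintro rfl
      refine ⟨⟨fun a b => ?_⟩, ⟨Quotient.mk _ ⟨0, hn⟩⟩⟩
      induction a using Quotient.ind
      induction b using Quotient.ind
      exact Quotient.sound trivial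
  -- Step 7: the coefficient of X in P is mu ⊥ ⊤.
  have hcoeff : P.coeff 1 = mu ⊥ ⊤ := by
    rw [hP, finset_sum_coeff]
    simp only [coeff_C_mul, coeff_X_pow]
    have hterm : ∀ σ : Setoid (Fin n),
        mu ⊥ σ * (if 1 = Nat.card (Quotient σ) then (1 : ℤ) else 0)
          = if σ = ⊤ then mu ⊥ σ else 0 := by
      intro σ
      by_cases h : σ = ⊤
      · have hc : Nat.card (Quotient σ) = 1 := (hctop σ).2 h
        rw [if_pos h, if_pos hc.symm, mul_one]
      · have hc : Nat.card (Quotient σ) ≠ 1 := fun he => h ((hctop σ).1 he)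
        rw [if_neg (fun he => hc he.symm), if_neg h, mul_zero]
    rw [Finset.sum_congr rfl fun σ _ => hterm σ, Finset.sum_ite_eq' univ ⊤ (mu ⊥),
      if_pos (mem_univ _)]
  -- Step 8: the coefficient of X in the falling factorial.
  have hQcoeff : (descPochhammer ℤ n).coeff 1
      = (-1) ^ (n - 1) * ((n - 1).factorial : ℤ) := by
    obtain ⟨m, rfl⟩ : ∃ m, n = m + 1 := ⟨n - 1, (Nat.succ_pred_eq_of_pos hn).symm⟩
    simp only [Nat.add_sub_cancel]
    exact descPochhammer_coeff_one_aux m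
  rw [← hcoeff, hPQ]
  exact hQcoeff
end

section
/- Every finite lattice in which every element is a join of atoms and which satisfies the semimodular law has a Möbius function that alternates in sign: (-1)^{rank(y) - rank(x)} μ(x,y) ≥ 0 for all x ≤ y (i.e., geometric lattices have alternating Möbius function). -/
section aux
variable {L : Type*} [Lattice L] [Fintype L]

theorem rk_strictMono' (rk : L → ℕ)
    (hrk_cov : ∀ x y : L, x ⋖ y → rk y = rk x + 1) :
    ∀ u v : L, u < v → rk u < rk v := by
  intro u
  induction u using WellFoundedGT.induction with
  | _ u IH =>
    intro v huv
    obtain ⟨w, hcov, hwv⟩ := exists_covBy_le_of_lt huv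
    rcases eq_or_lt_of_le hwv with rfl | hlt
    · have := hrk_cov u w hcov; omega
    · have h1 := hrk_cov u w hcov
      have h2 := IH w hcov.lt v hlt
      omega

theorem rk_mono' (rk : L → ℕ)
    (hrk_cov : ∀ x y : L, x ⋖ y → rk y = rk x + 1) :
    ∀ u v : L, u ≤ v → rk u ≤ rk v := by
  intro u v h
  rcases eq_or_lt_of_le h with rfl | h
  · exact le_rfl
  · exact (rk_strictMono' rk hrk_cov u v h).le

/-- Cover-lifting from the Birkhoff (both-cover) semimodularity condition,
using gradedness. -/
theorem covlift (hsemimod : ∀ x y : L, (x ⊓ y) ⋖ x → (x ⊓ y) ⋖ y → (x ⋖ x ⊔ y ∧ y ⋖ x ⊔ y))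
    (rk : L → ℕ) (hrk_cov : ∀ x y : L, x ⋖ y → rk y = rk x + 1) :
    ∀ (n : ℕ) (z a : L), z ⊓ a ⋖ a → rk z - rk (z ⊓ a) ≤ n →
      z ⊔ a = z ∨ z ⋖ z ⊔ a := by
  intro n
  induction n with
  | zero =>
    intro z a hca hn
    right
    have hle : z ⊓ a ≤ z := inf_le_left
    have heq : z ⊓ a = z := by
      rcases eq_or_lt_of_le hle with h | h
      · exact h
      · exact absurd (rk_strictMono' rk hrk_cov _ _ h) (by omega)
    have hza : z ≤ a := heq ▸ inf_le_right
    have : z ⊔ a = a := sup_eq_right.2 hza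
    rw [this]
    rw [heq] at hca; exact hca
  | succ n IH =>
    intro z a hca hn
    have hle : z ⊓ a ≤ z := inf_le_left
    rcases eq_or_lt_of_le hle with heq | hltz
    · right
      have hza : z ≤ a := heq ▸ inf_le_right
      have : z ⊔ a = a := sup_eq_right.2 hza
      rw [this, ← heq] at *
      rwa [heq] at hca
    · obtain ⟨z', hcov', hz'z⟩ := exists_covBy_le_of_lt hltz
      have hinf : z' ⊓ a = z ⊓ a := by
        apply le_antisymm
        · exact le_inf (le_trans inf_le_left hz'z) inf_le_right
        · exact le_inf hcov'.le inf_le_right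
      have hbirk := hsemimod z' a (hinf ▸ hcov') (hinf ▸ hca)
      set b := z' ⊔ a with hb
      have hzb : z ⊓ b = z' := by
        have h1 : z' ≤ z ⊓ b := le_inf hz'z le_sup_left
        rcases hbirk.1.eq_or_eq h1 inf_le_right with h | h
        · exact h
        · exfalso
          have hab : a ≤ z := le_trans (le_trans le_sup_right h.symm.le) inf_le_left
          have : z ⊓ a = a := inf_eq_right.2 hab
          exact hca.lt.ne this
      have hcb : z ⊓ b ⋖ b := hzb ▸ hbirk.1
      have hrkz' : rk z' = rk (z ⊓ a) + 1 := hrk_cov _ _ hcov'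
      have hmono : rk z' ≤ rk z := rk_mono' rk hrk_cov _ _ hz'z
      have hmeas : rk z - rk (z ⊓ b) ≤ n := by rw [hzb]; omega
      have hIH := IH z b hcb hmeas
      have hsupb : z ⊔ b = z ⊔ a := by
        rw [hb, ← sup_assoc, sup_eq_left.2 hz'z]
      rw [hsupb] at hIH
      exact hIH

end aux

section mu
open scoped Classical
variable {L : Type*} [Lattice L] [Fintype L]

theorem mu_sum_zero (mu : L → L → ℤ)
    (hmu_rec : ∀ x y : L, x < y → mu x y = -∑ᶠ z ∈ {z : L | x ≤ z ∧ z < y}, mu x z) :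
    ∀ x y : L, x < y →
      ∑ w ∈ Finset.univ.filter (fun w => x ≤ w ∧ w ≤ y), mu x w = 0 := by
  intro x y hxy
  have h1 : mu x y = -∑ w ∈ Finset.univ.filter (fun w => x ≤ w ∧ w < y), mu x w := by
    rw [hmu_rec x y hxy]
    congr 1
    rw [← finsum_mem_coe_finset]
    congr 1
    ext z; simp
  have h2 : Finset.univ.filter (fun w => x ≤ w ∧ w ≤ y)
      = insert y (Finset.univ.filter (fun w => x ≤ w ∧ w < y)) := by
    ext w
    simp only [Finset.mem_filter, Finset.mem_univ, true_and, Finset.mem_insert]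
    constructor
    · rintro ⟨h3, h4⟩
      rcases eq_or_lt_of_le h4 with h | h
      · exact Or.inl h
      · exact Or.inr ⟨h3, h⟩
    · rintro (rfl | ⟨h3, h4⟩)
      · exact ⟨hxy.le, le_rfl⟩
      · exact ⟨h3, h4.le⟩
  rw [h2, Finset.sum_insert (by simp), h1]
  ring

theorem weisner (mu : L → L → ℤ)
    (hmu_rec : ∀ x y : L, x < y → mu x y = -∑ᶠ z ∈ {z : L | x ≤ z ∧ z < y}, mu x z)
    (x a : L) (hxa : x < a) :
    ∀ y : L, a ≤ y →
      ∑ z ∈ Finset.univ.filter (fun z => (x ≤ z ∧ z ≤ y) ∧ z ⊔ a = y), mu x z = 0 := by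
  intro y
  induction y using WellFoundedLT.induction with
  | _ y IH =>
    intro hay
    have hxy : x < y := lt_of_lt_of_le hxa hay
    set T := Finset.univ.filter (fun w : L => x ≤ w ∧ w ≤ y) with hT
    have h0 : ∑ w ∈ T, mu x w = 0 := mu_sum_zero mu hmu_rec x y hxy
    have hmaps : ∀ w ∈ T, w ⊔ a ∈ T.image (· ⊔ a) := fun w hw => Finset.mem_image_of_mem _ hw
    have hfib := Finset.sum_fiberwise_of_maps_to hmaps (mu x)
    rw [h0] at hfib
    -- fibers over v ≠ y vanish by IH
    have hfz : ∀ v ∈ T.image (· ⊔ a), v ≠ y →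
        ∑ z ∈ T.filter (fun z => z ⊔ a = v), mu x z = 0 := by
      intro v hv hvy
      obtain ⟨w, hw, rfl⟩ := Finset.mem_image.1 hv
      rw [hT, Finset.mem_filter] at hw
      have hwy : w ≤ y := hw.2.2
      have havle : a ≤ w ⊔ a := le_sup_right
      have hvley : w ⊔ a ≤ y := sup_le hwy hay
      have hvlt : w ⊔ a < y := lt_of_le_of_ne hvley hvy
      have := IH (w ⊔ a) hvlt havle
      rw [← this]
      rw [hT, Finset.filter_filter]
      apply Finset.sum_congr _ (fun _ _ => rfl)
      ext z
      simp only [Finset.mem_filter, Finset.mem_univ, true_and]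
      constructor
      · rintro ⟨⟨h1, h2⟩, h3⟩
        exact ⟨⟨h1, h3 ▸ le_sup_left⟩, h3⟩
      · rintro ⟨⟨h1, h2⟩, h3⟩
        exact ⟨⟨h1, le_trans h2 hvley⟩, h3⟩
    have hymem : y ∈ T.image (· ⊔ a) := by
      apply Finset.mem_image.2
      exact ⟨y, by simp [hT, hxy.le], sup_eq_left.2 hay⟩
    have hyfib : ∑ z ∈ T.filter (fun z => z ⊔ a = y), mu x z = 0 := by
      have h9 := Finset.sum_eq_single_of_mem y hymem
        (f := fun v => ∑ z ∈ T.filter (fun z => z ⊔ a = v), mu x z)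
        (fun v hv hvy => hfz v hv hvy)
      exact h9.symm.trans hfib
    rw [hT, Finset.filter_filter] at hyfib
    exact hyfib
end mu

/-- Geometric lattices have alternating Möbius function: in a finite atomistic
semimodular (geometric) lattice with rank function `rk`,
`(-1)^(rk y - rk x) μ(x,y) ≥ 0` for all `x ≤ y`. -/
theorem geometric_lattice_mobius_alternates
    {L : Type*} [Lattice L] [BoundedOrder L] [Fintype L]
    (hatomistic : ∀ x : L, ∃ s : Finset L, (∀ a ∈ s, IsAtom a) ∧ x = s.sup id)
    (hsemimod : ∀ x y : L, (x ⊓ y) ⋖ x → (x ⊓ y) ⋖ y → (x ⋖ x ⊔ y ∧ y ⋖ x ⊔ y))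
    (rk : L → ℕ) (hrk_bot : rk ⊥ = 0)
    (hrk_cov : ∀ x y : L, x ⋖ y → rk y = rk x + 1)
    (mu : L → L → ℤ)
    (hmu_refl : ∀ x, mu x x = 1)
    (hmu_rec : ∀ x y, x < y → mu x y = -∑ᶠ z ∈ {z : L | x ≤ z ∧ z < y}, mu x z) :
    ∀ x y : L, x ≤ y → 0 ≤ (-1 : ℤ) ^ (rk y - rk x) * mu x y := by
  classical
  intro x y
  induction y using WellFoundedLT.induction with
  | _ y IH =>
    intro hxy
    rcases eq_or_lt_of_le hxy with rfl | hlt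
    · simp [hmu_refl]
    · obtain ⟨a, hcov, hay⟩ := exists_covBy_le_of_lt hlt
      set S := Finset.univ.filter (fun z : L => (x ≤ z ∧ z ≤ y) ∧ z ⊔ a = y) with hS
      have hW : ∑ z ∈ S, mu x z = 0 := weisner mu hmu_rec x a hcov.lt y hay
      have hymem : y ∈ S := by
        simp [hS, hxy, sup_eq_left.2 hay]
      have hsplit : mu x y + ∑ z ∈ S.erase y, mu x z = 0 := by
        rw [Finset.add_sum_erase _ _ hymem, hW]
      have hmuy : mu x y = -∑ z ∈ S.erase y, mu x z := by linarith
      -- every z in S.erase y is covered by y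
      have hcovz : ∀ z ∈ S.erase y, z ⋖ y ∧ x ≤ z := by
        intro z hz
        obtain ⟨hzy, hzS⟩ := Finset.mem_erase.1 hz
        rw [hS, Finset.mem_filter] at hzS
        obtain ⟨-, ⟨hxz, hzley⟩, hsup⟩ := hzS
        have haz : ¬ a ≤ z := by
          intro h
          exact hzy (by rw [← hsup, sup_eq_left.2 h])
        have hinfx : z ⊓ a = x := by
          rcases hcov.eq_or_eq (le_inf hxz hcov.lt.le) inf_le_right with h | h
          · exact h
          · exact absurd (h ▸ inf_le_left) haz
        have := covlift hsemimod rk hrk_cov (rk z) z a (hinfx ▸ hcov)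
          (by omega)
        rcases this with h | h
        · exact absurd (by rw [← hsup, h]) hzy.symm
        · rw [hsup] at h
          exact ⟨h, hxz⟩
      have hkey : (-1 : ℤ) ^ (rk y - rk x) * mu x y
          = ∑ z ∈ S.erase y, (-1 : ℤ) ^ (rk z - rk x) * mu x z := by
        rw [hmuy, mul_neg, Finset.mul_sum, ← Finset.sum_neg_distrib]
        apply Finset.sum_congr rfl
        intro z hz
        obtain ⟨hzcov, hxz⟩ := hcovz z hz
        have h1 : rk y = rk z + 1 := hrk_cov _ _ hzcov
        have h2 : rk x ≤ rk z := rk_mono' rk hrk_cov _ _ hxz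
        have h3 : rk y - rk x = (rk z - rk x) + 1 := by omega
        rw [h3, pow_succ]
        ring
      rw [hkey]
      apply Finset.sum_nonneg
      intro z hz
      obtain ⟨hzcov, hxz⟩ := hcovz z hz
      exact IH z hzcov.lt hxz
end

section
/- The number of tuples of pairwise vertex-disjoint lattice paths with unit steps (1,0) and (0,1) from sources A_1,...,A_k to sinks B_1,...,B_k (in a 'nonpermutable' configuration) equals det(M), where M_{ij} counts the lattice paths from A_i to B_j. -/
/-- `p` is a lattice path from `A` to `B` in `ℤ²` with unit steps `(1,0)` and `(0,1)`,
encoded as the list of its vertices. -/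
def IsLatticePath (p : List (ℤ × ℤ)) (A B : ℤ × ℤ) : Prop :=
  p.head? = some A ∧ p.getLast? = some B ∧
  p.Chain' (fun x y => y = (x.1 + 1, x.2) ∨ y = (x.1, x.2 + 1))

namespace LGV

abbrev V : Type := ℤ × ℤ

lemma path_chain_lt {p : List V} {A B : V} (h : IsLatticePath p A B) :
    p.Chain' (fun x y => x.1 + x.2 < y.1 + y.2) := by
  refine h.2.2.imp ?_
  rintro a b (rfl | rfl) <;> simp <;> omega

lemma path_pairwise_lt {p : List V} {A B : V} (h : IsLatticePath p A B) :
    p.Pairwise (fun x y => x.1 + x.2 < y.1 + y.2) := by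
  have inst : IsTrans V (fun x y : V => x.1 + x.2 < y.1 + y.2) := ⟨fun _ _ _ => lt_trans⟩
  exact (List.isChain_iff_pairwise).mp (path_chain_lt h)

lemma path_nodup {p : List V} {A B : V} (h : IsLatticePath p A B) : p.Nodup := by
  refine (path_pairwise_lt h).imp ?_
  intro a b hlt
  rintro rfl
  exact lt_irrefl _ hlt

lemma path_ne_nil {p : List V} {A B : V} (h : IsLatticePath p A B) : p ≠ [] := by
  rintro rfl; simp [IsLatticePath] at h

lemma glue {t d t' d' : List V} {x A B A' B' : V}
    (h : IsLatticePath (t ++ x :: d) A B) (h' : IsLatticePath (t' ++ x :: d') A' B') :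
    IsLatticePath (t ++ x :: d') A B' := by
  obtain ⟨h1, h2, h3⟩ := h
  obtain ⟨h1', h2', h3'⟩ := h'
  unfold List.Chain' at h3 h3'
  rw [List.isChain_append] at h3 h3'
  refine ⟨?_, ?_, ?_⟩
  · cases t with
    | nil => simpa using h1
    | cons a s => simpa using h1
  · rw [List.getLast?_append] at h2' ⊢
    cases hld : (x :: d').getLast? with
    | none => exact absurd hld (by simp)
    | some c => rw [hld] at h2'; simpa [hld] using h2'
  · unfold List.Chain'
    rw [List.isChain_append]
    exact ⟨h3.1, h3'.2.1, by simpa using h3.2.2⟩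

lemma takeWhile_append_eq {α : Type*} (q : α → Bool) {t : List α} (d : List α) {x : α}
    (ht : ∀ a ∈ t, q a = true) (hx : q x = false) :
    (t ++ x :: d).takeWhile q = t ∧ (t ++ x :: d).dropWhile q = x :: d := by
  induction t with
  | nil => simp [List.takeWhile_cons, List.dropWhile_cons, hx]
  | cons a s ih =>
      have ha : q a = true := ht a (by simp)
      have := ih (fun b hb => ht b (by simp [hb]))
      simp [List.takeWhile_cons, List.dropWhile_cons, ha, this.1, this.2]

lemma headI_cons_tail {α : Type*} [Inhabited α] {l : List α} (h : l ≠ []) :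
    l.headI :: l.tail = l := by
  cases l with
  | nil => exact absurd rfl h
  | cons a s => simp

lemma dropWhile_ne_nil {α : Type*} {q : α → Bool} {l : List α} {a : α}
    (ha : a ∈ l) (hqa : q a = false) : l.dropWhile q ≠ [] := by
  intro h
  rw [List.dropWhile_eq_nil_iff] at h
  rw [h a ha] at hqa; simp at hqa

lemma head_eq_headI {α : Type*} [Inhabited α] {l : List α} (h : l ≠ []) : l.head h = l.headI := by
  cases l with
  | nil => exact absurd rfl h
  | cons a s => rfl

lemma path_sum_bounds {p : List V} {A B : V} (h : IsLatticePath p A B) :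
    ∀ x ∈ p, A.1 + A.2 ≤ x.1 + x.2 ∧ x.1 + x.2 ≤ B.1 + B.2 := by
  have hpw := path_pairwise_lt h
  intro x hx
  constructor
  · cases p with
    | nil => simp at hx
    | cons a s =>
        have ha : a = A := by simpa using h.1
        rcases List.mem_cons.mp hx with rfl | hxs
        · rw [ha]
        · subst ha
          exact le_of_lt (List.rel_of_pairwise_cons hpw hxs)
  · have hpw' : p.reverse.Pairwise (fun a b : V => b.1 + b.2 < a.1 + a.2) :=
      List.pairwise_reverse.mpr hpw
    have hx' : x ∈ p.reverse := List.mem_reverse.mpr hx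
    have hh : p.reverse.head? = some B := by rw [List.head?_reverse]; exact h.2.1
    cases hrev : p.reverse with
    | nil => rw [hrev] at hx'; simp at hx'
    | cons a s =>
        rw [hrev] at hh hx' hpw'
        have ha : a = B := by simpa using hh
        rcases List.mem_cons.mp hx' with rfl | hxs
        · rw [ha]
        · subst ha
          exact le_of_lt (List.rel_of_pairwise_cons hpw' hxs)
lemma finite_bounded_lists {α : Type*} {S : Set α} (hS : S.Finite) (n : ℕ) :
    {l : List α | l.length ≤ n ∧ ∀ x ∈ l, x ∈ S}.Finite := by
  induction n with
  | zero =>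
      refine Set.Finite.subset (Set.finite_singleton []) ?_
      rintro l ⟨h1, _⟩
      simp only [Set.mem_singleton_iff]
      exact List.length_eq_zero_iff.mp (Nat.le_zero.mp h1)
  | succ n ih =>
      refine Set.Finite.subset ((hS.image2 List.cons ih).insert []) ?_
      rintro l ⟨h1, h2⟩
      cases l with
      | nil => simp
      | cons a s =>
          refine Set.mem_insert_iff.mpr (Or.inr ?_)
          exact Set.mem_image2_of_mem (h2 a (by simp))
            ⟨by simp only [List.length_cons] at h1; omega, fun x hx => h2 x (by simp [hx])⟩

lemma path_pairwise_le {p : List V} {A B : V} (h : IsLatticePath p A B) :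
    p.Pairwise (fun x y : V => x ≤ y) := by
  have inst : IsTrans V (fun x y : V => x ≤ y) := ⟨fun _ _ _ => le_trans⟩
  refine (List.isChain_iff_pairwise).mp (h.2.2.imp ?_)
  rintro a b (rfl | rfl) <;> refine Prod.le_def.mpr ⟨?_, ?_⟩ <;> simp

lemma path_mem_Icc {p : List V} {A B : V} (h : IsLatticePath p A B) :
    ∀ x ∈ p, x ∈ Set.Icc A B := by
  have hpw := path_pairwise_le h
  intro x hx
  constructor
  · cases p with
    | nil => simp at hx
    | cons a s =>
        have ha : a = A := by simpa using h.1
        rcases List.mem_cons.mp hx with rfl | hxs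
        · rw [ha]
        · subst ha
          exact List.rel_of_pairwise_cons hpw hxs
  · have hpw' : p.reverse.Pairwise (fun a b : V => b ≤ a) :=
      List.pairwise_reverse.mpr hpw
    have hx' : x ∈ p.reverse := List.mem_reverse.mpr hx
    have hh : p.reverse.head? = some B := by rw [List.head?_reverse]; exact h.2.1
    cases hrev : p.reverse with
    | nil => rw [hrev] at hx'; simp at hx'
    | cons a s =>
        rw [hrev] at hh hx' hpw'
        have ha : a = B := by simpa using hh
        rcases List.mem_cons.mp hx' with rfl | hxs
        · rw [ha]
        · subst ha
          exact List.rel_of_pairwise_cons hpw' hxs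

lemma path_length_le {p : List V} {A B : V} (h : IsLatticePath p A B) :
    p.length ≤ (Finset.Icc (A.1 + A.2) (B.1 + B.2)).card := by
  classical
  set f : V → ℤ := fun v => v.1 + v.2 with hf
  have hnd : (p.map f).Pairwise (· < ·) := by
    rw [List.pairwise_map]
    exact path_pairwise_lt h
  have hnd' : (p.map f).Nodup := hnd.imp ne_of_lt
  have hsub : (p.map f).toFinset ⊆ Finset.Icc (A.1 + A.2) (B.1 + B.2) := by
    intro a ha
    rw [List.mem_toFinset, List.mem_map] at ha
    obtain ⟨x, hx, rfl⟩ := ha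
    exact Finset.mem_Icc.mpr (path_sum_bounds h x hx)
  calc p.length = (p.map f).length := (List.length_map _).symm
    _ = (p.map f).toFinset.card := (List.toFinset_card_of_nodup hnd').symm
    _ ≤ _ := Finset.card_le_card hsub

lemma path_finite (A B : V) : {p : List V | IsLatticePath p A B}.Finite := by
  refine Set.Finite.subset
    (finite_bounded_lists (Set.finite_Icc A B) ((Finset.Icc (A.1 + A.2) (B.1 + B.2)).card)) ?_
  intro p hp
  refine ⟨path_length_le hp, fun x hx => ?_⟩
  exact path_mem_Icc hp x hx
def omin (s : Finset (Fin k)) : Option (Fin k) :=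
  if h : s.Nonempty then some (s.min' h) else none

lemma omin_eq_some {s : Finset (Fin k)} {a : Fin k} (ha : a ∈ s) (hmin : ∀ b ∈ s, a ≤ b) :
    omin s = some a := by
  rw [omin, dif_pos ⟨a, ha⟩]
  exact congrArg some (le_antisymm (Finset.min'_le s a ha) (Finset.le_min' _ _ _ hmin))

lemma omin_spec {s : Finset (Fin k)} {a : Fin k} (h : omin s = some a) :
    a ∈ s ∧ ∀ b ∈ s, a ≤ b := by
  rw [omin] at h
  split at h
  · rename_i hne
    obtain rfl : s.min' hne = a := by simpa using h
    exact ⟨Finset.min'_mem s hne, fun b hb => Finset.min'_le s b hb⟩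
  · simp at h

lemma omin_isSome {s : Finset (Fin k)} (h : s.Nonempty) : ∃ a, omin s = some a := by
  rw [omin, dif_pos h]; exact ⟨_, rfl⟩

def crossSet (p : Fin k → List V) : Finset (Fin k) :=
  Finset.univ.filter fun i => ∃ j, j ≠ i ∧ ∃ v ∈ p i, v ∈ p j

def avoidB (p : Fin k → List V) (i : Fin k) (v : V) : Bool :=
  decide (∀ j, j ≠ i → v ∉ p j)

def xOf (p : Fin k → List V) (i : Fin k) : V :=
  ((p i).dropWhile (avoidB p i)).headI

def sJ (p : Fin k → List V) (i : Fin k) : Finset (Fin k) :=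
  Finset.univ.filter fun m => m ≠ i ∧ xOf p i ∈ p m

def swapData (p : Fin k → List V) (i j : Fin k) (x : V) : Fin k → List V :=
  Function.update
    (Function.update p i
      ((p i).takeWhile (avoidB p i) ++ x :: ((p j).dropWhile (fun v => decide (v ≠ x))).tail))
    j
    ((p j).takeWhile (fun v => decide (v ≠ x)) ++ x :: ((p i).dropWhile (avoidB p i)).tail)

def lgvNext (σ : Equiv.Perm (Fin k)) (p : Fin k → List V) :
    Equiv.Perm (Fin k) × (Fin k → List V) :=
  (omin (crossSet p)).elim (σ, p) fun i =>
    (omin (sJ p i)).elim (σ, p) fun j =>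
      (σ * Equiv.swap i j, swapData p i j (xOf p i))

lemma lgvNext_eq {σ : Equiv.Perm (Fin k)} {p : Fin k → List V} {i j : Fin k}
    (h1 : omin (crossSet p) = some i) (h2 : omin (sJ p i) = some j) :
    lgvNext σ p = (σ * Equiv.swap i j, swapData p i j (xOf p i)) := by
  rw [lgvNext, h1, Option.elim_some, h2, Option.elim_some]

variable {k : ℕ}

lemma master {A B : Fin k → V} {σ : Equiv.Perm (Fin k)} {p : Fin k → List V}
    (hg : ∀ i, IsLatticePath (p i) (A i) (B (σ i)))
    (hnd : ¬ ∀ i j, i ≠ j → ∀ x ∈ p i, x ∉ p j) :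
    (∀ i, IsLatticePath ((lgvNext σ p).2 i) (A i) (B ((lgvNext σ p).1 i))) ∧
    (¬ ∀ i j, i ≠ j → ∀ x ∈ (lgvNext σ p).2 i, x ∉ (lgvNext σ p).2 j) ∧
    (lgvNext σ p).1 ≠ σ ∧
    (Equiv.Perm.sign (lgvNext σ p).1 = - Equiv.Perm.sign σ) ∧
    lgvNext (lgvNext σ p).1 (lgvNext σ p).2 = (σ, p) := by
  classical
  push_neg at hnd
  obtain ⟨a, b, hab, v, hva, hvb⟩ := hnd
  -- the crossing set is nonempty
  have hcp : (crossSet p).Nonempty := by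
    refine ⟨a, ?_⟩
    simp only [crossSet, Finset.mem_filter, Finset.mem_univ, true_and]
    exact ⟨b, hab.symm, v, hva, hvb⟩
  obtain ⟨i, hoi⟩ := omin_isSome hcp
  obtain ⟨hi_mem, hi_min⟩ := omin_spec hoi
  have hi_cross : ∃ j, j ≠ i ∧ ∃ v ∈ p i, v ∈ p j := by
    simpa only [crossSet, Finset.mem_filter, Finset.mem_univ, true_and] using hi_mem
  -- split p i at the first vertex meeting another path
  obtain ⟨j₀, hj₀, v₀, hv₀i, hv₀j⟩ := hi_cross
  have hv₀bad : avoidB p i v₀ = false := by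
    simp only [avoidB, decide_eq_false_iff_not]
    push_neg
    exact ⟨j₀, hj₀, hv₀j⟩
  have hr1ne : (p i).dropWhile (avoidB p i) ≠ [] := dropWhile_ne_nil hv₀i hv₀bad
  set x : V := xOf p i with hxdef
  set d1 : List V := ((p i).dropWhile (avoidB p i)).tail with hd1def
  have hxval : ((p i).dropWhile (avoidB p i)).headI = x := by rw [hxdef]; rfl
  have hr1 : (p i).dropWhile (avoidB p i) = x :: d1 := by
    rw [← hxval]; exact (headI_cons_tail hr1ne).symm
  set t1 : List V := (p i).takeWhile (avoidB p i) with ht1def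
  have hsplit1 : t1 ++ x :: d1 = p i := by
    rw [ht1def, ← hr1]; exact List.takeWhile_append_dropWhile
  have ht1 : ∀ u ∈ t1, avoidB p i u = true := fun u hu => List.mem_takeWhile_imp hu
  have hx_false : avoidB p i x = false := by
    have h1 := List.head_dropWhile_not (avoidB p i) hr1ne
    rwa [head_eq_headI hr1ne, hxval] at h1
  have hx_ex : ∃ j, j ≠ i ∧ x ∈ p j := by
    have := hx_false
    simp only [avoidB, decide_eq_false_iff_not] at this
    push_neg at this
    obtain ⟨j, hj1, hj2⟩ := this
    exact ⟨j, hj1, hj2⟩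
  have hxi : x ∈ p i := by rw [← hsplit1]; simp
  -- the second path through x
  have hsJ : (sJ p i).Nonempty := by
    obtain ⟨j, hj1, hj2⟩ := hx_ex
    exact ⟨j, by simp only [sJ, Finset.mem_filter, Finset.mem_univ, true_and]; exact ⟨hj1, hj2⟩⟩
  obtain ⟨j, hoj⟩ := omin_isSome hsJ
  obtain ⟨hj_mem, hj_min'⟩ := omin_spec hoj
  have hji : j ≠ i := by
    have := hj_mem; simp only [sJ, Finset.mem_filter] at this; exact this.2.1
  have hxj : x ∈ p j := by
    have := hj_mem; simp only [sJ, Finset.mem_filter] at this; exact this.2.2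
  have hj_min : ∀ m, m ≠ i → x ∈ p m → j ≤ m := by
    intro m h1 h2
    exact hj_min' m (by simp only [sJ, Finset.mem_filter, Finset.mem_univ, true_and]; exact ⟨h1, h2⟩)
  have hij : i ≠ j := hji.symm
  -- split p j at the first occurrence of x
  have hr2ne : (p j).dropWhile (fun u => decide (u ≠ x)) ≠ [] :=
    dropWhile_ne_nil hxj (by simp)
  set d2 : List V := ((p j).dropWhile (fun u => decide (u ≠ x))).tail with hd2def
  have hr2 : (p j).dropWhile (fun u => decide (u ≠ x)) = x :: d2 := by
    have h1 := List.head_dropWhile_not (fun u => decide (u ≠ x)) hr2ne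
    rw [head_eq_headI hr2ne] at h1
    simp only [decide_eq_false_iff_not, not_not] at h1
    conv_lhs => rw [← headI_cons_tail hr2ne]
    rw [h1]
  set t2 : List V := (p j).takeWhile (fun u => decide (u ≠ x)) with ht2def
  have hsplit2 : t2 ++ x :: d2 = p j := by
    rw [ht2def, ← hr2]; exact List.takeWhile_append_dropWhile
  have ht2 : ∀ u ∈ t2, u ≠ x := fun u hu => by simpa using List.mem_takeWhile_imp hu
  -- the swapped tuple
  set q : Fin k → List V := swapData p i j x with hqdef
  have hq_i : q i = t1 ++ x :: d2 := by
    rw [hqdef, swapData, Function.update_apply, if_neg hij, Function.update_self]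
  have hq_j : q j = t2 ++ x :: d1 := by
    rw [hqdef, swapData, Function.update_self]
  have hq_m : ∀ m, m ≠ i → m ≠ j → q m = p m := by
    intro m h1 h2
    rw [hqdef, swapData, Function.update_apply, if_neg h2, Function.update_apply, if_neg h1]
  have hnext : lgvNext σ p = (σ * Equiv.swap i j, q) := lgvNext_eq hoi hoj
  -- goodness of the swapped tuple
  have hpath1 : IsLatticePath (t1 ++ x :: d1) (A i) (B (σ i)) := by rw [hsplit1]; exact hg i
  have hpath2 : IsLatticePath (t2 ++ x :: d2) (A j) (B (σ j)) := by rw [hsplit2]; exact hg j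
  have happ_i : (σ * Equiv.swap i j) i = σ j := by simp
  have happ_j : (σ * Equiv.swap i j) j = σ i := by simp
  have hgood : ∀ m, IsLatticePath (q m) (A m) (B ((σ * Equiv.swap i j) m)) := by
    intro m
    rcases eq_or_ne m i with rfl | hmi
    · rw [hq_i, happ_i]
      exact glue hpath1 hpath2
    · rcases eq_or_ne m j with rfl | hmj
      · rw [hq_j, happ_j]
        exact glue hpath2 hpath1
      · have happ : (σ * Equiv.swap i j) m = σ m := by
          simp [Equiv.Perm.mul_apply, Equiv.swap_apply_of_ne_of_ne hmi hmj]
        rw [hq_m m hmi hmj, happ]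
        exact hg m
  have hx_qi : x ∈ q i := by rw [hq_i]; simp
  have hx_qj : x ∈ q j := by rw [hq_j]; simp
  have hndq : ¬ ∀ a b, a ≠ b → ∀ u ∈ q a, u ∉ q b := fun h => h i j hij x hx_qi hx_qj
  have hsign : Equiv.Perm.sign (σ * Equiv.swap i j) = - Equiv.Perm.sign σ := by
    rw [Equiv.Perm.sign_mul, Equiv.Perm.sign_swap hij, mul_neg_one]
  have hne : σ * Equiv.swap i j ≠ σ := by
    intro h
    have h1 : Equiv.swap i j = 1 := mul_left_cancel (a := σ) (by rw [h, mul_one])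
    have h2 := congrArg (fun e : Equiv.Perm (Fin k) => e i) h1
    simp only [Equiv.swap_apply_left, Equiv.Perm.coe_one, id_eq] at h2
    exact hij h2.symm
  -- data for the reverse application
  have hnodsplit : (t1 ++ x :: d1).Nodup := by rw [hsplit1]; exact path_nodup (hg i)
  have hdisj1 : t1.Disjoint (x :: d1) := by
    rw [List.nodup_append] at hnodsplit
    exact fun a ha hb => hnodsplit.2.2 a ha a hb rfl
  have hsub_qi : ∀ u ∈ q i, u ∈ p i ∨ u ∈ p j := by
    rw [hq_i]
    intro u hu
    rcases List.mem_append.mp hu with h | h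
    · exact Or.inl (by rw [← hsplit1]; exact List.mem_append_left _ h)
    · exact Or.inr (by rw [← hsplit2]; exact List.mem_append_right _ h)
  have hsub_qj : ∀ u ∈ q j, u ∈ p i ∨ u ∈ p j := by
    rw [hq_j]
    intro u hu
    rcases List.mem_append.mp hu with h | h
    · exact Or.inr (by rw [← hsplit2]; exact List.mem_append_left _ h)
    · rcases List.mem_cons.mp h with rfl | h'
      · exact Or.inl hxi
      · exact Or.inl (by rw [← hsplit1]; exact List.mem_append_right _ (List.mem_cons_of_mem _ h'))
  have hj_cross : j ∈ crossSet p := by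
    simp only [crossSet, Finset.mem_filter, Finset.mem_univ, true_and]
    exact ⟨i, hij, x, hxj, hxi⟩
  have hilt : i < j := lt_of_le_of_ne (hi_min j hj_cross) hij
  have hiq : i ∈ crossSet q := by
    simp only [crossSet, Finset.mem_filter, Finset.mem_univ, true_and]
    exact ⟨j, hji, x, hx_qi, hx_qj⟩
  have homin_q : omin (crossSet q) = some i := by
    apply omin_eq_some hiq
    intro m hm
    by_contra hlt
    push_neg at hlt
    have hmi : m ≠ i := ne_of_lt hlt
    have hmj : m ≠ j := ne_of_lt (lt_trans hlt hilt)
    have hm_not : m ∉ crossSet p := fun hc => absurd (hi_min m hc) (not_le.mpr hlt)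
    apply hm_not
    simp only [crossSet, Finset.mem_filter, Finset.mem_univ, true_and] at hm ⊢
    obtain ⟨n, hnm, u, hum, hun⟩ := hm
    rw [hq_m m hmi hmj] at hum
    have hEx : ∃ n', n' ≠ m ∧ u ∈ p n' := by
      rcases eq_or_ne n i with hni | hni
      · rw [hni] at hun
        rcases hsub_qi u hun with h | h
        · exact ⟨i, Ne.symm hmi, h⟩
        · exact ⟨j, Ne.symm hmj, h⟩
      · rcases eq_or_ne n j with hnj | hnj
        · rw [hnj] at hun
          rcases hsub_qj u hun with h | h
          · exact ⟨i, Ne.symm hmi, h⟩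
          · exact ⟨j, Ne.symm hmj, h⟩
        · exact ⟨n, hnm, by rwa [hq_m n hni hnj] at hun⟩
    obtain ⟨n', h1, h2⟩ := hEx
    exact ⟨n', h1, u, hum, h2⟩
  -- splitting the new path q i
  have havoid_q_x : avoidB q i x = false := by
    simp only [avoidB, decide_eq_false_iff_not]
    push_neg
    exact ⟨j, hji, hx_qj⟩
  have havoid_q_t1 : ∀ u ∈ t1, avoidB q i u = true := by
    intro u hu
    have hup : ∀ n, n ≠ i → u ∉ p n := by
      have := ht1 u hu
      simpa only [avoidB, decide_eq_true_eq] using this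
    simp only [avoidB, decide_eq_true_eq]
    intro n hn
    rcases eq_or_ne n j with rfl | hnj
    · rw [hq_j]
      intro hmem
      rcases List.mem_append.mp hmem with h | h
      · exact hup n hn (by rw [← hsplit2]; exact List.mem_append_left _ h)
      · exact hdisj1 hu h
    · rw [hq_m n hn hnj]
      exact hup n hn
  have hsplitq1 := takeWhile_append_eq (avoidB q i) d2 havoid_q_t1 havoid_q_x
  have htake_qi : (q i).takeWhile (avoidB q i) = t1 := by rw [hq_i]; exact hsplitq1.1
  have hdrop_qi : (q i).dropWhile (avoidB q i) = x :: d2 := by rw [hq_i]; exact hsplitq1.2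
  have hxOf_q : xOf q i = x := by
    show ((q i).dropWhile (avoidB q i)).headI = x
    rw [hdrop_qi]
    rfl
  have homin_sJq : omin (sJ q i) = some j := by
    apply omin_eq_some
    · simp only [sJ, Finset.mem_filter, Finset.mem_univ, true_and, hxOf_q]
      exact ⟨hji, hx_qj⟩
    · intro m hm
      simp only [sJ, Finset.mem_filter, Finset.mem_univ, true_and, hxOf_q] at hm
      obtain ⟨hmi, hxm⟩ := hm
      rcases eq_or_ne m j with rfl | hmj
      · exact le_refl _
      · rw [hq_m m hmi hmj] at hxm
        exact hj_min m hmi hxm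
  -- splitting the new path q j
  have ht2' : ∀ u ∈ t2, (fun u => decide (u ≠ x)) u = true := fun u hu => by simp [ht2 u hu]
  have hsplitq2 := takeWhile_append_eq (x := x) (fun u => decide (u ≠ x)) d1 ht2' (by simp)
  have htake_qj : (q j).takeWhile (fun u => decide (u ≠ x)) = t2 := by rw [hq_j]; exact hsplitq2.1
  have hdrop_qj : (q j).dropWhile (fun u => decide (u ≠ x)) = x :: d1 := by
    rw [hq_j]; exact hsplitq2.2
  -- the swap is an involution
  have hswap_q : swapData q i j x = p := by
    funext m
    rw [swapData]
    rcases eq_or_ne m j with rfl | hmj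
    · rw [Function.update_self, htake_qj, hdrop_qi]
      simpa using hsplit2
    · rw [Function.update_apply, if_neg hmj, Function.update_apply]
      rcases eq_or_ne m i with rfl | hmi
      · rw [if_pos rfl, htake_qi, hdrop_qj]
        simpa using hsplit1
      · rw [if_neg hmi]
        exact hq_m m hmi hmj
  have hfinal : lgvNext (σ * Equiv.swap i j) q = (σ, p) := by
    rw [lgvNext_eq homin_q homin_sJq, hxOf_q, hswap_q]
    rw [mul_assoc, Equiv.swap_mul_self, mul_one]
  rw [hnext]
  exact ⟨hgood, hndq, hne, hsign, hfinal⟩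


end LGV

open Finset in
/-- The Lindström–Gessel–Viennot lemma: if the sources `A₁,…,A_k` and sinks `B₁,…,B_k`
are in a nonpermutable configuration (any family of pairwise vertex-disjoint lattice
paths joining the `A`'s to the `B`'s must join `Aᵢ` to `Bᵢ`), then the number of tuples
of pairwise vertex-disjoint lattice paths with path `i` running from `Aᵢ` to `Bᵢ` equals
`det M`, where `M i j` is the number of lattice paths from `Aᵢ` to `Bⱼ`. -/
theorem lindstrom_gessel_viennot (k : ℕ) (A B : Fin k → ℤ × ℤ)
    (hnonperm : ∀ (σ : Equiv.Perm (Fin k)) (p : Fin k → List (ℤ × ℤ)),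
      (∀ i, IsLatticePath (p i) (A i) (B (σ i))) →
      (∀ i j, i ≠ j → ∀ x ∈ p i, x ∉ p j) → σ = 1) :
    (Nat.card {p : Fin k → List (ℤ × ℤ) //
        (∀ i, IsLatticePath (p i) (A i) (B i)) ∧
        (∀ i j, i ≠ j → ∀ x ∈ p i, x ∉ p j)} : ℤ) =
      Matrix.det (Matrix.of fun i j =>
        (Nat.card {q : List (ℤ × ℤ) // IsLatticePath q (A i) (B j)} : ℤ)) := by
  classical
  set PF : Fin k → Fin k → Finset (List (ℤ × ℤ)) :=
    fun i j => (LGV.path_finite (A i) (B j)).toFinset with hPF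
  have hPFmem : ∀ i j q, q ∈ PF i j ↔ IsLatticePath q (A i) (B j) := by
    intro i j q
    simp [hPF]
  have hcard : ∀ i j, Nat.card {q : List (ℤ × ℤ) // IsLatticePath q (A i) (B j)}
      = (PF i j).card := by
    intro i j
    have h1 : Nat.card {q : List (ℤ × ℤ) // IsLatticePath q (A i) (B j)}
        = Set.ncard {q : List (ℤ × ℤ) | IsLatticePath q (A i) (B j)} :=
      Nat.card_coe_set_eq _
    rw [h1, Set.ncard_eq_toFinset_card _ (LGV.path_finite (A i) (B j))]
  set allT : Finset (Fin k → List (ℤ × ℤ)) :=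
    Fintype.piFinset (fun i => Finset.univ.biUnion fun j => PF i j) with hallT
  have hmemT : ∀ (σ : Equiv.Perm (Fin k)) (p : Fin k → List (ℤ × ℤ)),
      (∀ i, IsLatticePath (p i) (A i) (B (σ i))) → p ∈ allT := by
    intro σ p hp
    rw [hallT, Fintype.mem_piFinset]
    intro i
    exact Finset.mem_biUnion.mpr ⟨σ i, Finset.mem_univ _, (hPFmem _ _ _).mpr (hp i)⟩
  -- determinant expansion
  have hdet : Matrix.det (Matrix.of fun i j =>
        (Nat.card {q : List (ℤ × ℤ) // IsLatticePath q (A i) (B j)} : ℤ))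
      = ∑ σ : Equiv.Perm (Fin k), ∑ p ∈ allT,
          (if (∀ i, IsLatticePath (p i) (A i) (B (σ i)))
            then ((Equiv.Perm.sign σ : ℤˣ) : ℤ) else 0) := by
    rw [← Matrix.det_transpose, Matrix.det_apply']
    refine Finset.sum_congr rfl ?_
    intro σ _
    have hfilter : allT.filter (fun p => ∀ i, IsLatticePath (p i) (A i) (B (σ i)))
        = Fintype.piFinset (fun i => PF i (σ i)) := by
      ext p
      simp only [Finset.mem_filter, Fintype.mem_piFinset, hallT, Finset.mem_biUnion,
        Finset.mem_univ, true_and]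
      constructor
      · rintro ⟨-, h2⟩ i
        exact (hPFmem _ _ _).mpr (h2 i)
      · intro h
        exact ⟨fun i => ⟨σ i, h i⟩, fun i => (hPFmem _ _ _).mp (h i)⟩
    rw [← Finset.sum_filter, hfilter, Finset.sum_const, Fintype.card_piFinset, nsmul_eq_mul]
    push_cast
    rw [mul_comm]
    congr 1
    refine Finset.prod_congr rfl ?_
    intro i _
    simp only [Matrix.transpose_apply, Matrix.of_apply, hcard]
  rw [hdet]
  -- split each term according to disjointness
  have hsplit : ∀ (σ : Equiv.Perm (Fin k)) (p : Fin k → List (ℤ × ℤ)),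
      (if (∀ i, IsLatticePath (p i) (A i) (B (σ i)))
        then ((Equiv.Perm.sign σ : ℤˣ) : ℤ) else 0)
      = (if (∀ i, IsLatticePath (p i) (A i) (B (σ i))) ∧ (∀ i j, i ≠ j → ∀ x ∈ p i, x ∉ p j)
          then ((Equiv.Perm.sign σ : ℤˣ) : ℤ) else 0)
        + (if (∀ i, IsLatticePath (p i) (A i) (B (σ i))) ∧
              ¬ (∀ i j, i ≠ j → ∀ x ∈ p i, x ∉ p j)
            then ((Equiv.Perm.sign σ : ℤˣ) : ℤ) else 0) := by
    intro σ p
    by_cases h1 : (∀ i, IsLatticePath (p i) (A i) (B (σ i)))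
    · by_cases h2 : (∀ i j, i ≠ j → ∀ x ∈ p i, x ∉ p j)
      · rw [if_pos h1, if_pos ⟨h1, h2⟩, if_neg (fun h => h.2 h2), add_zero]
      · rw [if_pos h1, if_neg (fun h => h2 h.2), if_pos ⟨h1, h2⟩, zero_add]
    · rw [if_neg h1, if_neg (fun h => h1 h.1), if_neg (fun h => h1 h.1), add_zero]
  simp only [hsplit, Finset.sum_add_distrib]
  -- the nondisjoint part vanishes via the involution
  have hzero : ∑ σ : Equiv.Perm (Fin k), ∑ p ∈ allT,
      (if (∀ i, IsLatticePath (p i) (A i) (B (σ i))) ∧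
          ¬ (∀ i j, i ≠ j → ∀ x ∈ p i, x ∉ p j)
        then ((Equiv.Perm.sign σ : ℤˣ) : ℤ) else 0) = 0 := by
    rw [← Finset.sum_product']
    rw [← Finset.sum_filter]
    refine Finset.sum_involution (fun t _ => LGV.lgvNext t.1 t.2) ?_ ?_ ?_ ?_
    · intro t ht
      rw [Finset.mem_filter] at ht
      obtain ⟨-, hGood, hnd⟩ := ht
      obtain ⟨-, -, -, hsign, -⟩ := LGV.master (A := A) (B := B) hGood hnd
      have : ((Equiv.Perm.sign (LGV.lgvNext t.1 t.2).1 : ℤˣ) : ℤ)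
          = - ((Equiv.Perm.sign t.1 : ℤˣ) : ℤ) := by
        rw [hsign]; push_cast; ring
      rw [this]; ring
    · intro t ht _
      rw [Finset.mem_filter] at ht
      obtain ⟨-, hGood, hnd⟩ := ht
      obtain ⟨-, -, hne, -, -⟩ := LGV.master (A := A) (B := B) hGood hnd
      intro h
      exact hne (congrArg Prod.fst h)
    · intro t ht
      rw [Finset.mem_filter] at ht ⊢
      obtain ⟨-, hGood, hnd⟩ := ht
      obtain ⟨hGood', hnd', -, -, -⟩ := LGV.master (A := A) (B := B) hGood hnd
      exact ⟨Finset.mem_product.mpr ⟨Finset.mem_univ _, hmemT _ _ hGood'⟩, hGood', hnd'⟩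
    · intro t ht
      rw [Finset.mem_filter] at ht
      obtain ⟨-, hGood, hnd⟩ := ht
      obtain ⟨-, -, -, -, hinv⟩ := LGV.master (A := A) (B := B) hGood hnd
      exact hinv
  rw [hzero, add_zero]
  -- the disjoint part: only σ = 1 contributes
  rw [Finset.sum_eq_single (1 : Equiv.Perm (Fin k))]
  · -- value at σ = 1
    have h1 : ∀ p : Fin k → List (ℤ × ℤ),
        ((∀ i, IsLatticePath (p i) (A i) (B ((1 : Equiv.Perm (Fin k)) i))) ∧
          (∀ i j, i ≠ j → ∀ x ∈ p i, x ∉ p j))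
        ↔ ((∀ i, IsLatticePath (p i) (A i) (B i)) ∧
          (∀ i j, i ≠ j → ∀ x ∈ p i, x ∉ p j)) := by
      intro p
      simp [Equiv.Perm.one_apply]
    have hC : (Nat.card {p : Fin k → List (ℤ × ℤ) //
          (∀ i, IsLatticePath (p i) (A i) (B i)) ∧
          (∀ i j, i ≠ j → ∀ x ∈ p i, x ∉ p j)})
        = (allT.filter (fun p => (∀ i, IsLatticePath (p i) (A i) (B i)) ∧
            (∀ i j, i ≠ j → ∀ x ∈ p i, x ∉ p j))).card := by
      have hset : {p : Fin k → List (ℤ × ℤ) |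
          (∀ i, IsLatticePath (p i) (A i) (B i)) ∧
          (∀ i j, i ≠ j → ∀ x ∈ p i, x ∉ p j)}
          = ↑(allT.filter (fun p => (∀ i, IsLatticePath (p i) (A i) (B i)) ∧
              (∀ i j, i ≠ j → ∀ x ∈ p i, x ∉ p j))) := by
        ext p
        simp only [Set.mem_setOf_eq, Finset.coe_filter, Finset.mem_filter]
        constructor
        · intro h
          refine ⟨hmemT 1 p ?_, h⟩
          simpa [Equiv.Perm.one_apply] using h.1
        · exact fun h => h.2
      have h2 : Nat.card {p : Fin k → List (ℤ × ℤ) //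
          (∀ i, IsLatticePath (p i) (A i) (B i)) ∧
          (∀ i j, i ≠ j → ∀ x ∈ p i, x ∉ p j)}
          = Set.ncard {p : Fin k → List (ℤ × ℤ) |
          (∀ i, IsLatticePath (p i) (A i) (B i)) ∧
          (∀ i j, i ≠ j → ∀ x ∈ p i, x ∉ p j)} := Nat.card_coe_set_eq _
      rw [h2, hset, Set.ncard_coe_finset]
    simp only [h1]
    rw [← Finset.sum_filter, Finset.sum_const, hC]
    simp
  · intro σ _ hσ
    refine Finset.sum_eq_zero ?_
    intro p _
    rw [if_neg]
    rintro ⟨hGood, hDisj⟩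
    exact hσ (hnonperm σ p hGood hDisj)
  · intro h
    exact absurd (Finset.mem_univ _) h
end

section
/- For the symmetric group S_n, the number of pairs (P,Q) of standard Young tableaux of the same shape λ, summed over all partitions λ of n, equals n! (a consequence of the RSK correspondence). -/
/-- A standard Young tableau of shape `μ`: a filling of the cells of `μ` by
`1, …, μ.card` (bijectively), increasing along rows and down columns,
and zero outside the diagram. -/
def IsSYT (μ : YoungDiagram) (T : ℕ × ℕ → ℕ) : Prop :=
  Set.BijOn T (μ.cells : Set (ℕ × ℕ)) (Set.Icc 1 μ.card) ∧
  (∀ c, c ∉ μ.cells → T c = 0) ∧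
  (∀ i j j', (i, j) ∈ μ.cells → (i, j') ∈ μ.cells → j < j' → T (i, j) < T (i, j')) ∧
  (∀ i i' j, (i, j) ∈ μ.cells → (i', j) ∈ μ.cells → i < i' → T (i, j) < T (i', j))

namespace SYTAux
open Finset

instance : DecidableEq YoungDiagram := fun μ ν =>
  decidable_of_iff (μ.cells = ν.cells) ⟨fun h => YoungDiagram.ext h, fun h => by rw [h]⟩

/-- Young diagrams of card `n` have cells in the `n × n` square. -/
lemma cells_subset_square {μ : YoungDiagram} {n : ℕ} (h : μ.card = n) :
    μ.cells ⊆ Finset.range n ×ˢ Finset.range n := by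
  intro c hc
  obtain ⟨i, j⟩ := c
  have h1 : i < μ.colLen 0 := by
    have := YoungDiagram.mem_iff_lt_colLen.mp (μ.up_left_mem le_rfl (Nat.zero_le _) hc)
    simpa using this
  have h2 : j < μ.rowLen 0 := by
    have := YoungDiagram.mem_iff_lt_rowLen.mp (μ.up_left_mem (Nat.zero_le _) le_rfl hc)
    simpa using this
  have hc1 : μ.colLen 0 ≤ n := by
    rw [← h, YoungDiagram.colLen_eq_card]
    exact Finset.card_le_card (fun x hx => (YoungDiagram.mem_col_iff.mp hx).1)
  have hr1 : μ.rowLen 0 ≤ n := by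
    rw [← h, YoungDiagram.rowLen_eq_card]
    exact Finset.card_le_card (fun x hx => (YoungDiagram.mem_row_iff.mp hx).1)
  simp only [Finset.mem_product, Finset.mem_range]
  omega

/-- All Young diagrams with `n` cells, as a `Finset`. -/
def allYD (n : ℕ) : Finset YoungDiagram :=
  (((Finset.range n ×ˢ Finset.range n).powerset.filter
    (fun s => s.card = n ∧ ∀ p ∈ s, ∀ q ∈ Finset.range n ×ˢ Finset.range n,
       q.1 ≤ p.1 → q.2 ≤ p.2 → q ∈ s)).attach).image
    (fun s => YoungDiagram.mk s.1 (by
      obtain ⟨hpow, _, hlow⟩ := Finset.mem_filter.mp s.2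
      intro a b hba ha
      have hb : b ∈ Finset.range n ×ˢ Finset.range n := by
        have ha' := Finset.mem_powerset.mp hpow ha
        simp only [Finset.mem_product, Finset.mem_range] at ha' ⊢
        exact ⟨lt_of_le_of_lt hba.1 ha'.1, lt_of_le_of_lt hba.2 ha'.2⟩
      exact hlow a ha b hb hba.1 hba.2))

lemma mem_allYD {n : ℕ} {μ : YoungDiagram} : μ ∈ allYD n ↔ μ.card = n := by
  constructor
  · rintro h
    obtain ⟨s, _, rfl⟩ := Finset.mem_image.mp h
    exact (Finset.mem_filter.mp s.2).2.1
  · intro h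
    apply Finset.mem_image.mpr
    have hmem : μ.cells ∈ (Finset.range n ×ˢ Finset.range n).powerset.filter
        (fun s => s.card = n ∧ ∀ p ∈ s, ∀ q ∈ Finset.range n ×ˢ Finset.range n,
          q.1 ≤ p.1 → q.2 ≤ p.2 → q ∈ s) := by
      refine Finset.mem_filter.mpr ⟨Finset.mem_powerset.mpr (cells_subset_square h), h, ?_⟩
      intro p hp q _ hq1 hq2
      exact μ.up_left_mem hq1 hq2 hp
    exact ⟨⟨μ.cells, hmem⟩, Finset.mem_attach _ _, by ext; simp⟩

/-- The number of standard Young tableaux of shape `μ`. -/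
noncomputable def f (μ : YoungDiagram) : ℕ := Nat.card {T : ℕ × ℕ → ℕ // IsSYT μ T}

instance decLE : @DecidableRel YoungDiagram YoungDiagram (· ≤ ·) := fun μ ν =>
  decidable_of_iff (μ.cells ⊆ ν.cells) Iff.rfl

instance sytFinite (μ : YoungDiagram) : Finite {T : ℕ × ℕ → ℕ // IsSYT μ T} := by
  refine Finite.of_injective
    (fun T => (fun c : {x // x ∈ μ.cells} => (⟨T.1 c, T.2.1.mapsTo c.2⟩ : Set.Icc 1 μ.card)))
    ?_
  rintro ⟨T, hT⟩ ⟨U, hU⟩ h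
  refine Subtype.ext (funext fun x => ?_)
  by_cases hx : x ∈ μ.cells
  · have := congrFun h ⟨x, hx⟩
    simpa using this
  · show T x = U x
    rw [hT.2.1 x hx, hU.2.1 x hx]

/-- Diagrams covering `μ` in Young's lattice. -/
def up (μ : YoungDiagram) : Finset YoungDiagram :=
  (allYD (μ.card + 1)).filter (fun ν => μ ≤ ν)

/-- Diagrams covered by `μ` in Young's lattice. -/
def down (μ : YoungDiagram) : Finset YoungDiagram :=
  (allYD (μ.card - 1)).filter (fun ν => ν ≤ μ ∧ ν.card + 1 = μ.card)

lemma mem_up {μ ν : YoungDiagram} : ν ∈ up μ ↔ μ ≤ ν ∧ ν.card = μ.card + 1 := by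
  simp only [up, Finset.mem_filter, mem_allYD]; tauto

lemma mem_down {μ ν : YoungDiagram} : ν ∈ down μ ↔ ν ≤ μ ∧ ν.card + 1 = μ.card := by
  simp only [down, Finset.mem_filter, mem_allYD]
  constructor
  · tauto
  · intro h; exact ⟨by omega, h⟩

lemma mem_down_iff_mem_up {ν lam : YoungDiagram} : ν ∈ down lam ↔ lam ∈ up ν := by
  rw [mem_down, mem_up]; tauto

lemma down_exists_cell {μ ν : YoungDiagram} (h : ν ∈ down μ) :
    ∃ c, μ.cells = insert c ν.cells ∧ c ∉ ν.cells := by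
  obtain ⟨hle, hcard⟩ := mem_down.mp h
  have hsub : ν.cells ⊆ μ.cells := hle
  have hcard' : ν.cells.card + 1 = μ.cells.card := hcard
  have : (μ.cells \ ν.cells).card = 1 := by
    rw [Finset.card_sdiff_of_subset hsub]; omega
  obtain ⟨c, hc⟩ := Finset.card_eq_one.mp this
  have hcmem : c ∈ μ.cells \ ν.cells := hc ▸ Finset.mem_singleton_self c
  refine ⟨c, ?_, (Finset.mem_sdiff.mp hcmem).2⟩
  apply Finset.Subset.antisymm
  · intro x hx
    by_cases hxv : x ∈ ν.cells
    · exact Finset.mem_insert_of_mem hxv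
    · have : x ∈ μ.cells \ ν.cells := Finset.mem_sdiff.mpr ⟨hx, hxv⟩
      rw [hc] at this
      simp only [Finset.mem_singleton] at this
      rw [this]
      exact Finset.mem_insert_self c _
  · intro x hx
    rcases Finset.mem_insert.mp hx with rfl | hx
    · exact (Finset.mem_sdiff.mp hcmem).1
    · exact hsub hx

/-- The unique cell of `μ` not in `ν`, for `ν ∈ down μ`. -/
noncomputable def dcell {μ ν : YoungDiagram} (h : ν ∈ down μ) : ℕ × ℕ :=
  (down_exists_cell h).choose

lemma dcell_spec {μ ν : YoungDiagram} (h : ν ∈ down μ) :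
    μ.cells = insert (dcell h) ν.cells ∧ dcell h ∉ ν.cells :=
  (down_exists_cell h).choose_spec

end SYTAux
namespace SYTAux
open Finset

lemma card_eq_succ_of_insert {μ ν : YoungDiagram} {c : ℕ × ℕ}
    (hcells : μ.cells = insert c ν.cells) (hc : c ∉ ν.cells) : μ.card = ν.card + 1 := by
  show μ.cells.card = ν.cells.card + 1
  rw [hcells, Finset.card_insert_of_notMem hc]

lemma corner_of_insert {μ ν : YoungDiagram} {c : ℕ × ℕ}
    (hcells : μ.cells = insert c ν.cells) (hc : c ∉ ν.cells) :
    (c.1, c.2 + 1) ∉ μ.cells ∧ (c.1 + 1, c.2) ∉ μ.cells := by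
  constructor
  · intro hmem
    rw [hcells] at hmem
    rcases Finset.mem_insert.mp hmem with h | h
    · exact absurd (congrArg Prod.snd h) (by simp)
    · exact hc (ν.up_left_mem le_rfl (Nat.le_succ _) (by simpa using h))
  · intro hmem
    rw [hcells] at hmem
    rcases Finset.mem_insert.mp hmem with h | h
    · exact absurd (congrArg Prod.fst h) (by simp)
    · exact hc (ν.up_left_mem (Nat.le_succ _) le_rfl (by simpa using h))

lemma Icc_succ (k : ℕ) : Set.Icc 1 (k + 1) = insert (k + 1) (Set.Icc 1 k) := by
  ext x; simp only [Set.mem_Icc, Set.mem_insert_iff]; omega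

lemma glue_isSYT {μ ν : YoungDiagram} {c : ℕ × ℕ}
    (hcells : μ.cells = insert c ν.cells) (hc : c ∉ ν.cells)
    {T : ℕ × ℕ → ℕ} (hT : IsSYT ν T) :
    IsSYT μ (Function.update T c μ.card) := by
  have hcard : μ.card = ν.card + 1 := card_eq_succ_of_insert hcells hc
  have hcmem : c ∈ μ.cells := by rw [hcells]; exact Finset.mem_insert_self c _
  have hsub : ν.cells ⊆ μ.cells := by rw [hcells]; exact Finset.subset_insert _ _
  obtain ⟨hr, hd⟩ := corner_of_insert hcells hc
  have heq : Set.EqOn (Function.update T c μ.card) T (ν.cells : Set (ℕ × ℕ)) := by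
    intro x hx
    apply Function.update_of_ne
    rintro rfl
    exact hc hx
  have hvalν : ∀ x ∈ ν.cells, Function.update T c μ.card x = T x := fun x hx => heq hx
  refine ⟨?_, ?_, ?_, ?_⟩
  · -- BijOn
    have : Set.BijOn (Function.update T c μ.card) (ν.cells : Set (ℕ × ℕ))
        (Set.Icc 1 ν.card) := (hT.1.congr heq.symm)
    have hbij := this.insert (a := c) (by
      rw [Function.update_self]
      simp only [Set.mem_Icc, not_and, not_le]
      omega)
    rw [Function.update_self] at hbij
    have h1 : (μ.cells : Set (ℕ × ℕ)) = insert c (ν.cells : Set (ℕ × ℕ)) := by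
      rw [hcells]; simp
    rw [h1, hcard, Icc_succ]
    rw [hcard] at hbij
    exact hbij
  · intro x hx
    have hxc : x ≠ c := fun h => hx (h ▸ hcmem)
    have hxν : x ∉ ν.cells := fun h => hx (hsub h)
    rw [Function.update_of_ne hxc, hT.2.1 x hxν]
  · intro i j j' h1 h2 hjj
    by_cases hc1 : (i, j) = c
    · exfalso
      apply hr
      have : c.1 = i ∧ c.2 = j := by rw [← hc1]; exact ⟨rfl, rfl⟩
      obtain ⟨e1, e2⟩ := this
      rw [e1, e2]
      exact μ.up_left_mem le_rfl (by omega) h2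
    · by_cases hc2 : (i, j') = c
      · rw [Function.update_of_ne hc1, hc2, Function.update_self]
        have h1ν : (i, j) ∈ ν.cells := by
          rcases Finset.mem_insert.mp (hcells ▸ h1) with h | h
          · exact absurd h hc1
          · exact h
        have := (hT.1.mapsTo h1ν).2
        omega
      · have h1ν : (i, j) ∈ ν.cells := by
          rcases Finset.mem_insert.mp (hcells ▸ h1) with h | h
          · exact absurd h hc1
          · exact h
        have h2ν : (i, j') ∈ ν.cells := by
          rcases Finset.mem_insert.mp (hcells ▸ h2) with h | h
          · exact absurd h hc2
          · exact h
        rw [Function.update_of_ne hc1, Function.update_of_ne hc2]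
        exact hT.2.2.1 i j j' h1ν h2ν hjj
  · intro i i' j h1 h2 hii
    by_cases hc1 : (i, j) = c
    · exfalso
      apply hd
      have : c.1 = i ∧ c.2 = j := by rw [← hc1]; exact ⟨rfl, rfl⟩
      obtain ⟨e1, e2⟩ := this
      rw [e1, e2]
      exact μ.up_left_mem (by omega) le_rfl h2
    · by_cases hc2 : (i', j) = c
      · rw [Function.update_of_ne hc1, hc2, Function.update_self]
        have h1ν : (i, j) ∈ ν.cells := by
          rcases Finset.mem_insert.mp (hcells ▸ h1) with h | h
          · exact absurd h hc1
          · exact h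
        have := (hT.1.mapsTo h1ν).2
        omega
      · have h1ν : (i, j) ∈ ν.cells := by
          rcases Finset.mem_insert.mp (hcells ▸ h1) with h | h
          · exact absurd h hc1
          · exact h
        have h2ν : (i', j) ∈ ν.cells := by
          rcases Finset.mem_insert.mp (hcells ▸ h2) with h | h
          · exact absurd h hc2
          · exact h
        rw [Function.update_of_ne hc1, Function.update_of_ne hc2]
        exact hT.2.2.2 i i' j h1ν h2ν hii

lemma cut_isSYT {μ ν : YoungDiagram} {c : ℕ × ℕ}
    (hcells : ν.cells = μ.cells.erase c) (hc : c ∈ μ.cells)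
    {T : ℕ × ℕ → ℕ} (hT : IsSYT μ T) (hval : T c = μ.card) :
    IsSYT ν (Function.update T c 0) := by
  have hsub : ν.cells ⊆ μ.cells := by rw [hcells]; exact Finset.erase_subset _ _
  have hcν : c ∉ ν.cells := by rw [hcells]; exact Finset.notMem_erase _ _
  have hcard : ν.card + 1 = μ.card := by
    show ν.cells.card + 1 = μ.cells.card
    rw [hcells, Finset.card_erase_add_one hc]
  have hne : ∀ x ∈ ν.cells, x ≠ c := fun x hx h => hcν (h ▸ hx)
  have hupd : ∀ x ∈ ν.cells, Function.update T c 0 x = T x := fun x hx =>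
    Function.update_of_ne (hne x hx) _ _
  refine ⟨?_, ?_, ?_, ?_⟩
  · refine ⟨?_, ?_, ?_⟩
    · intro x hx
      rw [hupd x hx]
      have h1 := hT.1.mapsTo (hsub hx)
      simp only [Set.mem_Icc] at h1 ⊢
      refine ⟨h1.1, ?_⟩
      have : T x ≠ μ.card := fun h => hne x hx (hT.1.injOn (hsub hx) hc (h.trans hval.symm))
      omega
    · intro x hx y hy hxy
      rw [hupd x hx, hupd y hy] at hxy
      exact hT.1.injOn (hsub hx) (hsub hy) hxy
    · intro y hy
      have hy' : y ∈ Set.Icc 1 μ.card := by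
        simp only [Set.mem_Icc] at hy ⊢
        omega
      obtain ⟨x, hx, hxy⟩ := hT.1.surjOn hy'
      have hxc : x ≠ c := by
        intro h
        rw [h, hval] at hxy
        simp only [Set.mem_Icc] at hy
        omega
      have hxν : x ∈ ν.cells := by
        rw [hcells]
        exact Finset.mem_erase.mpr ⟨hxc, hx⟩
      exact ⟨x, hxν, by rw [hupd x hxν]; exact hxy⟩
  · intro x hx
    by_cases hxc : x = c
    · rw [hxc, Function.update_self]
    · rw [Function.update_of_ne hxc]
      apply hT.2.1
      intro hxμ
      exact hx (by rw [hcells]; exact Finset.mem_erase.mpr ⟨hxc, hxμ⟩)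
  · intro i j j' h1 h2 hjj
    rw [hupd _ h1, hupd _ h2]
    exact hT.2.2.1 i j j' (hsub h1) (hsub h2) hjj
  · intro i i' j h1 h2 hii
    rw [hupd _ h1, hupd _ h2]
    exact hT.2.2.2 i i' j (hsub h1) (hsub h2) hii

end SYTAux
namespace SYTAux
open Finset

lemma erase_isLowerSet {μ : YoungDiagram} {c : ℕ × ℕ} (hc : c ∈ μ.cells)
    (hr : (c.1, c.2 + 1) ∉ μ.cells) (hd : (c.1 + 1, c.2) ∉ μ.cells) :
    IsLowerSet ((μ.cells.erase c : Finset (ℕ × ℕ)) : Set (ℕ × ℕ)) := by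
  intro a b hba ha
  have ha' : a ∈ μ.cells.erase c := ha
  obtain ⟨hane, haμ⟩ := Finset.mem_erase.mp ha'
  have hbμ : b ∈ μ.cells := μ.up_left_mem hba.1 hba.2 haμ
  have hbne : b ≠ c := by
    rintro rfl
    have h1 : b.1 < a.1 ∨ b.2 < a.2 := by
      by_contra hcon
      push_neg at hcon
      exact hane (Prod.ext (le_antisymm hba.1 hcon.1) (le_antisymm hba.2 hcon.2)).symm
    rcases h1 with h | h
    · exact hd (μ.up_left_mem (by omega) hba.2 haμ)
    · exact hr (μ.up_left_mem hba.1 (by omega) haμ)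
  exact Finset.mem_coe.mpr (Finset.mem_erase.mpr ⟨hbne, hbμ⟩)

lemma top_cell {μ : YoungDiagram} {T : ℕ × ℕ → ℕ} (hT : IsSYT μ T) (h0 : μ.card ≠ 0) :
    ∃ c ∈ μ.cells, T c = μ.card := by
  have : μ.card ∈ Set.Icc 1 μ.card := by simp only [Set.mem_Icc]; omega
  obtain ⟨c, hc, hval⟩ := hT.1.surjOn this
  exact ⟨c, hc, hval⟩

lemma top_corner {μ : YoungDiagram} {T : ℕ × ℕ → ℕ} (hT : IsSYT μ T) {c : ℕ × ℕ}
    (hc : c ∈ μ.cells) (hval : T c = μ.card) :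
    (c.1, c.2 + 1) ∉ μ.cells ∧ (c.1 + 1, c.2) ∉ μ.cells := by
  constructor
  · intro hmem
    have h1 := hT.2.2.1 c.1 c.2 (c.2 + 1) hc hmem (by omega)
    have h2 := (hT.1.mapsTo hmem).2
    rw [hval] at h1
    omega
  · intro hmem
    have h1 := hT.2.2.2 c.1 (c.1 + 1) c.2 hc hmem (by omega)
    have h2 := (hT.1.mapsTo hmem).2
    rw [hval] at h1
    omega

/-- Gluing map: an SYT of a diagram below `μ` plus the new cell gives an SYT of `μ`. -/
noncomputable def Psi (μ : YoungDiagram)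
    (x : Σ ν : {ν // ν ∈ down μ}, {T : ℕ × ℕ → ℕ // IsSYT ν.1 T}) :
    {T : ℕ × ℕ → ℕ // IsSYT μ T} :=
  ⟨Function.update x.2.1 (dcell x.1.2) μ.card,
    glue_isSYT (dcell_spec x.1.2).1 (dcell_spec x.1.2).2 x.2.2⟩

lemma Psi_bijective (μ : YoungDiagram) (h0 : μ.card ≠ 0) : Function.Bijective (Psi μ) := by
  constructor
  · rintro ⟨⟨νx, hx⟩, ⟨Tx, hTx⟩⟩ ⟨⟨νy, hy⟩, ⟨Ty, hTy⟩⟩ h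
    have hfun : Function.update Tx (dcell hx) μ.card = Function.update Ty (dcell hy) μ.card :=
      congrArg Subtype.val h
    obtain ⟨hxc1, hxc2⟩ := dcell_spec hx
    obtain ⟨hyc1, hyc2⟩ := dcell_spec hy
    have hxcard : νx.card + 1 = μ.card := (mem_down.mp hx).2
    -- the distinguished cells agree
    have hcc : dcell hx = dcell hy := by
      by_contra hne
      have h1 := congrFun hfun (dcell hy)
      rw [Function.update_of_ne (Ne.symm hne), Function.update_self] at h1
      by_cases hmem : dcell hy ∈ νx.cells
      · have h2 : Tx (dcell hy) ≤ νx.card := (hTx.1.mapsTo hmem).2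
        omega
      · rw [hTx.2.1 _ hmem] at h1
        omega
    have hνcells : νx.cells = νy.cells := by
      have e1 : νx.cells = μ.cells.erase (dcell hx) := by
        rw [hxc1, Finset.erase_insert hxc2]
      have e2 : νy.cells = μ.cells.erase (dcell hy) := by
        rw [hyc1, Finset.erase_insert hyc2]
      rw [e1, e2, hcc]
    have hν : νx = νy := YoungDiagram.ext hνcells
    subst hν
    have hT : Tx = Ty := by
      funext a
      by_cases hac : a = dcell hx
      · rw [hac, hTx.2.1 _ hxc2, hTy.2.1 _ (by rw [← hcc] at hyc2; exact hyc2)]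
      · have := congrFun hfun a
        rw [Function.update_of_ne hac, Function.update_of_ne (by rw [← hcc]; exact hac)] at this
        exact this
    subst hT
    rfl
  · rintro ⟨U, hU⟩
    obtain ⟨c, hcmem, hcval⟩ := top_cell hU h0
    obtain ⟨hr, hd⟩ := top_corner hU hcmem hcval
    set ν : YoungDiagram := ⟨μ.cells.erase c, erase_isLowerSet hcmem hr hd⟩ with hνdef
    have hνcells : ν.cells = μ.cells.erase c := rfl
    have hνd : ν ∈ down μ := by
      refine mem_down.mpr ⟨?_, ?_⟩
      · intro x hx
        exact (Finset.mem_erase.mp hx).2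
      · show ν.cells.card + 1 = μ.cells.card
        rw [hνcells, Finset.card_erase_add_one hcmem]
    have hT : IsSYT ν (Function.update U c 0) := cut_isSYT hνcells hcmem hU hcval
    refine ⟨⟨⟨ν, hνd⟩, ⟨Function.update U c 0, hT⟩⟩, ?_⟩
    obtain ⟨hc1, hc2⟩ := dcell_spec hνd
    have hcc : dcell hνd = c := by
      have hmem : dcell hνd ∈ μ.cells := by
        rw [hc1]; exact Finset.mem_insert_self _ _
      have : dcell hνd ∉ μ.cells.erase c := by rw [← hνcells]; exact hc2
      by_contra hne
      exact this (Finset.mem_erase.mpr ⟨hne, hmem⟩)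
    apply Subtype.ext
    show Function.update (Function.update U c 0) (dcell hνd) μ.card = U
    rw [hcc]
    funext a
    by_cases hac : a = c
    · rw [hac, Function.update_self, hcval]
    · rw [Function.update_of_ne hac, Function.update_of_ne hac]

theorem branching (μ : YoungDiagram) (h0 : μ.card ≠ 0) : f μ = ∑ ν ∈ down μ, f ν := by
  have e : {T : ℕ × ℕ → ℕ // IsSYT μ T} ≃
      Σ ν : {ν // ν ∈ down μ}, {T : ℕ × ℕ → ℕ // IsSYT ν.1 T} :=
    (Equiv.ofBijective (Psi μ) (Psi_bijective μ h0)).symm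
  rw [f, Nat.card_congr e]
  letI : ∀ ν : {ν // ν ∈ down μ}, Fintype {T : ℕ × ℕ → ℕ // IsSYT ν.1 T} :=
    fun ν => Fintype.ofFinite _
  rw [Nat.card_eq_fintype_card, Fintype.card_sigma]
  rw [← Finset.sum_coe_sort (down μ) f]
  congr 1
  funext ν
  rw [f, Nat.card_eq_fintype_card]
end SYTAux
namespace SYTAux
open Finset

lemma not_mem_rowLen (μ : YoungDiagram) (i : ℕ) : (i, μ.rowLen i) ∉ μ.cells := by
  intro h
  exact lt_irrefl _ (YoungDiagram.mem_iff_lt_rowLen.mp h)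

lemma lt_colLen_of_rowLen_pos {μ : YoungDiagram} {k : ℕ} (h : 0 < μ.rowLen k) :
    k < μ.colLen 0 :=
  YoungDiagram.mem_iff_lt_colLen.mp
    (μ.up_left_mem le_rfl (Nat.zero_le _) (YoungDiagram.mem_iff_lt_rowLen.mpr h))

lemma insert_isLowerSet (μ : YoungDiagram) (i : ℕ)
    (h : i = 0 ∨ μ.rowLen i < μ.rowLen (i - 1)) :
    IsLowerSet ((insert (i, μ.rowLen i) μ.cells : Finset (ℕ × ℕ)) : Set (ℕ × ℕ)) := by
  intro a b hba ha
  simp only [Finset.coe_insert, Set.mem_insert_iff, Finset.mem_coe] at ha ⊢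
  rcases ha with rfl | ha
  · -- a = (i, rowLen i)
    have hb1 : b.1 ≤ i := hba.1
    have hb2 : b.2 ≤ μ.rowLen i := hba.2
    by_cases hbi : b.1 = i
    · by_cases hbj : b.2 = μ.rowLen i
      · left; exact Prod.ext hbi hbj
      · right
        have : b.2 < μ.rowLen i := lt_of_le_of_ne hb2 hbj
        have : (b.1, b.2) ∈ μ := by
          rw [hbi]
          exact YoungDiagram.mem_iff_lt_rowLen.mpr this
        simpa using this
    · right
      have hlt : b.1 < i := lt_of_le_of_ne hb1 hbi
      rcases h with rfl | h
      · omega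
      · have h1 : μ.rowLen (i - 1) ≤ μ.rowLen b.1 := μ.rowLen_anti _ _ (by omega)
        have : (b.1, b.2) ∈ μ := YoungDiagram.mem_iff_lt_rowLen.mpr (by omega)
        simpa using this
  · right
    exact μ.up_left_mem hba.1 hba.2 ha

/-- Add a cell at the end of row `i`. -/
def addRow (μ : YoungDiagram) (i : ℕ) (h : i = 0 ∨ μ.rowLen i < μ.rowLen (i - 1)) :
    YoungDiagram :=
  ⟨insert (i, μ.rowLen i) μ.cells, insert_isLowerSet μ i h⟩

lemma addRow_mem_up (μ : YoungDiagram) (i : ℕ) (h : i = 0 ∨ μ.rowLen i < μ.rowLen (i - 1)) :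
    addRow μ i h ∈ up μ := by
  refine mem_up.mpr ⟨?_, ?_⟩
  · intro x hx
    exact Finset.mem_insert_of_mem hx
  · show (insert (i, μ.rowLen i) μ.cells).card = μ.cells.card + 1
    rw [Finset.card_insert_of_notMem (not_mem_rowLen μ i)]

lemma up_nonempty (μ : YoungDiagram) : (up μ).Nonempty :=
  ⟨addRow μ 0 (Or.inl rfl), addRow_mem_up μ 0 (Or.inl rfl)⟩

lemma added_cell {μ lam : YoungDiagram} {c : ℕ × ℕ}
    (h1 : lam.cells = insert c μ.cells) (h2 : c ∉ μ.cells) :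
    c.2 = μ.rowLen c.1 ∧ (c.1 = 0 ∨ μ.rowLen c.1 < μ.rowLen (c.1 - 1)) := by
  have hclam : c ∈ lam.cells := by rw [h1]; exact Finset.mem_insert_self _ _
  have hstep : ∀ j' < c.2, (c.1, j') ∈ μ.cells := by
    intro j' hj'
    have hmem : (c.1, j') ∈ lam.cells := lam.up_left_mem le_rfl (le_of_lt hj') (by simpa using hclam)
    rw [h1] at hmem
    rcases Finset.mem_insert.mp hmem with h | h
    · exfalso
      have := congrArg Prod.snd h
      simp at this
      omega
    · exact h
  have hle : c.2 ≤ μ.rowLen c.1 := by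
    rcases Nat.eq_zero_or_pos c.2 with h | h
    · omega
    · have := YoungDiagram.mem_iff_lt_rowLen.mp (hstep (c.2 - 1) (by omega))
      omega
  have hge : μ.rowLen c.1 ≤ c.2 := by
    by_contra hcon
    push_neg at hcon
    exact h2 (YoungDiagram.mem_iff_lt_rowLen.mpr hcon)
  refine ⟨le_antisymm hle hge, ?_⟩
  rcases Nat.eq_zero_or_pos c.1 with h | h
  · exact Or.inl h
  · right
    have hmem : (c.1 - 1, c.2) ∈ lam.cells :=
      lam.up_left_mem (i2 := c.1) (j2 := c.2) (by omega) le_rfl (by simpa using hclam)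
    rw [h1] at hmem
    rcases Finset.mem_insert.mp hmem with heq | hmem
    · exfalso
      have := congrArg Prod.fst heq
      simp at this
      omega
    · have := YoungDiagram.mem_iff_lt_rowLen.mp hmem
      omega

lemma removed_cell {μ ν : YoungDiagram} {c : ℕ × ℕ}
    (h1 : μ.cells = insert c ν.cells) (h2 : c ∉ ν.cells) :
    c.2 + 1 = μ.rowLen c.1 ∧ μ.rowLen (c.1 + 1) ≤ c.2 := by
  obtain ⟨hr, hd⟩ := corner_of_insert h1 h2
  have hcmem : c ∈ μ.cells := by rw [h1]; exact Finset.mem_insert_self _ _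
  have hlt : c.2 < μ.rowLen c.1 := YoungDiagram.mem_iff_lt_rowLen.mp (by simpa using hcmem)
  have hle : μ.rowLen c.1 ≤ c.2 + 1 := by
    by_contra hcon
    push_neg at hcon
    exact hr (YoungDiagram.mem_iff_lt_rowLen.mpr (by omega))
  have hd' : μ.rowLen (c.1 + 1) ≤ c.2 := by
    by_contra hcon
    push_neg at hcon
    exact hd (YoungDiagram.mem_iff_lt_rowLen.mpr hcon)
  omega

def addableRows (μ : YoungDiagram) : Finset ℕ :=
  (Finset.range (μ.colLen 0 + 1)).filter (fun i => i = 0 ∨ μ.rowLen i < μ.rowLen (i - 1))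

def removableRows (μ : YoungDiagram) : Finset ℕ :=
  (Finset.range (μ.colLen 0 + 1)).filter (fun i => μ.rowLen (i + 1) < μ.rowLen i)

lemma addableRows_eq (μ : YoungDiagram) :
    addableRows μ = insert 0 ((removableRows μ).image (· + 1)) := by
  ext i
  simp only [addableRows, removableRows, Finset.mem_filter, Finset.mem_range,
    Finset.mem_insert, Finset.mem_image]
  constructor
  · rintro ⟨hi, h0 | h⟩
    · exact Or.inl h0
    · rcases Nat.eq_zero_or_pos i with rfl | hpos
      · exact Or.inl rfl
      · right
        exact ⟨i - 1, ⟨by omega, by rwa [show i - 1 + 1 = i by omega]⟩, by omega⟩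
  · rintro (rfl | ⟨k, ⟨hk1, hk2⟩, rfl⟩)
    · exact ⟨by omega, Or.inl rfl⟩
    · have hkc : k < μ.colLen 0 := lt_colLen_of_rowLen_pos (by omega)
      exact ⟨by omega, Or.inr (by simpa using hk2)⟩

lemma card_addableRows (μ : YoungDiagram) :
    (addableRows μ).card = (removableRows μ).card + 1 := by
  rw [addableRows_eq, Finset.card_insert_of_notMem (by simp),
    Finset.card_image_of_injective _ (fun a b => by omega)]

lemma card_up_eq (μ : YoungDiagram) : (up μ).card = (addableRows μ).card := by
  refine Finset.card_bij (fun lam hl => (dcell (mem_down_iff_mem_up.mpr hl)).1) ?_ ?_ ?_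
  · intro lam hl
    obtain ⟨hc1, hc2⟩ := dcell_spec (mem_down_iff_mem_up.mpr hl)
    obtain ⟨he, hcond⟩ := added_cell hc1 hc2
    simp only [addableRows, Finset.mem_filter, Finset.mem_range]
    refine ⟨?_, hcond⟩
    rcases hcond with h | h
    · omega
    · have : (dcell (mem_down_iff_mem_up.mpr hl)).1 - 1 < μ.colLen 0 :=
        lt_colLen_of_rowLen_pos (k := (dcell (mem_down_iff_mem_up.mpr hl)).1 - 1) (by omega)
      omega
  · intro lam1 hl1 lam2 hl2 heq
    have heq' : (dcell (mem_down_iff_mem_up.mpr hl1)).1 =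
        (dcell (mem_down_iff_mem_up.mpr hl2)).1 := heq
    obtain ⟨hc1, hc2⟩ := dcell_spec (mem_down_iff_mem_up.mpr hl1)
    obtain ⟨hd1, hd2⟩ := dcell_spec (mem_down_iff_mem_up.mpr hl2)
    obtain ⟨he1, _⟩ := added_cell hc1 hc2
    obtain ⟨he2, _⟩ := added_cell hd1 hd2
    have e1 : dcell (mem_down_iff_mem_up.mpr hl1) =
        ((dcell (mem_down_iff_mem_up.mpr hl1)).1, μ.rowLen (dcell (mem_down_iff_mem_up.mpr hl1)).1) := by
      rw [← he1]
    have e2 : dcell (mem_down_iff_mem_up.mpr hl2) =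
        ((dcell (mem_down_iff_mem_up.mpr hl2)).1, μ.rowLen (dcell (mem_down_iff_mem_up.mpr hl2)).1) := by
      rw [← he2]
    apply YoungDiagram.ext
    rw [hc1, hd1, e1, e2, heq']
  · intro i hi
    simp only [addableRows, Finset.mem_filter, Finset.mem_range] at hi
    refine ⟨addRow μ i hi.2, addRow_mem_up μ i hi.2, ?_⟩
    obtain ⟨hc1, hc2⟩ := dcell_spec (mem_down_iff_mem_up.mpr (addRow_mem_up μ i hi.2))
    have : dcell (mem_down_iff_mem_up.mpr (addRow_mem_up μ i hi.2)) ∈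
        insert (i, μ.rowLen i) μ.cells := by
      have : dcell (mem_down_iff_mem_up.mpr (addRow_mem_up μ i hi.2)) ∈ (addRow μ i hi.2).cells := by
        rw [hc1]; exact Finset.mem_insert_self _ _
      exact this
    rcases Finset.mem_insert.mp this with h | h
    · show (dcell (mem_down_iff_mem_up.mpr (addRow_mem_up μ i hi.2))).1 = i
      rw [h]
    · exact absurd h hc2

lemma card_down_eq (μ : YoungDiagram) : (down μ).card = (removableRows μ).card := by
  refine Finset.card_bij (fun ν hν => (dcell hν).1) ?_ ?_ ?_
  · intro ν hν
    obtain ⟨hc1, hc2⟩ := dcell_spec hν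
    obtain ⟨he, hle⟩ := removed_cell hc1 hc2
    simp only [removableRows, Finset.mem_filter, Finset.mem_range]
    have hcmem : dcell hν ∈ μ.cells := by rw [hc1]; exact Finset.mem_insert_self _ _
    have : (dcell hν).1 < μ.colLen 0 :=
      YoungDiagram.mem_iff_lt_colLen.mp (μ.up_left_mem le_rfl (Nat.zero_le _) (show ((dcell hν).1, (dcell hν).2) ∈ μ from hcmem))
    exact ⟨by omega, by omega⟩
  · intro ν1 hν1 ν2 hν2 heq
    have heq' : (dcell hν1).1 = (dcell hν2).1 := heq
    obtain ⟨hc1, hc2⟩ := dcell_spec hν1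
    obtain ⟨hd1, hd2⟩ := dcell_spec hν2
    obtain ⟨he1, _⟩ := removed_cell hc1 hc2
    obtain ⟨he2, _⟩ := removed_cell hd1 hd2
    have e1 : dcell hν1 = ((dcell hν1).1, μ.rowLen (dcell hν1).1 - 1) := by
      have := he1; exact Prod.ext rfl (by omega)
    have e2 : dcell hν2 = ((dcell hν2).1, μ.rowLen (dcell hν2).1 - 1) := by
      have := he2; exact Prod.ext rfl (by omega)
    apply YoungDiagram.ext
    have g1 : ν1.cells = μ.cells.erase (dcell hν1) := by rw [hc1, Finset.erase_insert hc2]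
    have g2 : ν2.cells = μ.cells.erase (dcell hν2) := by rw [hd1, Finset.erase_insert hd2]
    rw [g1, g2, e1, e2, heq']
  · intro i hi
    simp only [removableRows, Finset.mem_filter, Finset.mem_range] at hi
    have hpos : 0 < μ.rowLen i := by omega
    set c : ℕ × ℕ := (i, μ.rowLen i - 1) with hcdef
    have hcmem : c ∈ μ.cells := by
      have : (i, μ.rowLen i - 1) ∈ μ := YoungDiagram.mem_iff_lt_rowLen.mpr (by omega)
      simpa using this
    have hr : (c.1, c.2 + 1) ∉ μ.cells := by
      intro h
      have := YoungDiagram.mem_iff_lt_rowLen.mp (show (c.1, c.2+1) ∈ μ from h)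
      simp only [hcdef] at this
      omega
    have hd : (c.1 + 1, c.2) ∉ μ.cells := by
      intro h
      have := YoungDiagram.mem_iff_lt_rowLen.mp (show (c.1+1, c.2) ∈ μ from h)
      simp only [hcdef] at this
      omega
    set ν : YoungDiagram := ⟨μ.cells.erase c, erase_isLowerSet hcmem hr hd⟩ with hνdef
    have hνd : ν ∈ down μ := by
      refine mem_down.mpr ⟨?_, ?_⟩
      · intro x hx
        exact (Finset.mem_erase.mp hx).2
      · show (μ.cells.erase c).card + 1 = μ.cells.card
        rw [Finset.card_erase_add_one hcmem]
    refine ⟨ν, hνd, ?_⟩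
    obtain ⟨hc1, hc2⟩ := dcell_spec hνd
    have hmem : dcell hνd ∈ μ.cells := by rw [hc1]; exact Finset.mem_insert_self _ _
    have : dcell hνd = c := by
      by_contra hne
      exact hc2 (Finset.mem_erase.mpr ⟨hne, hmem⟩)
    show (dcell hνd).1 = i
    rw [this]

lemma card_up_down (μ : YoungDiagram) : (up μ).card = (down μ).card + 1 := by
  rw [card_up_eq, card_down_eq, card_addableRows]

lemma eq_of_le_of_card_le {μ ν : YoungDiagram} (h : μ ≤ ν) (hc : ν.card ≤ μ.card) : μ = ν :=
  YoungDiagram.ext (Finset.eq_of_subset_of_card_le h hc)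

lemma claim_card {n : ℕ} {μ ν : YoungDiagram} (hμ : μ.card = n) (hν : ν.card = n) :
    (up μ ∩ up ν).card = (down μ ∩ down ν).card + (if ν = μ then 1 else 0) := by
  by_cases hne : ν = μ
  · subst hne
    simp only [Finset.inter_self, if_pos rfl]
    exact card_up_down ν
  · rw [if_neg hne]
    have hnle1 : ¬ μ ≤ ν := fun h => hne (eq_of_le_of_card_le h (by omega)).symm
    have hnle2 : ¬ ν ≤ μ := fun h => hne (eq_of_le_of_card_le h (by omega))
    have hsum : (μ ⊔ ν).card + (μ ⊓ ν).card = n + n := by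
      show (μ.cells ∪ ν.cells).card + (μ.cells ∩ ν.cells).card = n + n
      rw [Finset.card_union_add_card_inter]
      show μ.card + ν.card = n + n
      omega
    have hsup_lt : n < (μ ⊔ ν).card := by
      rw [← hμ]
      apply Finset.card_lt_card
      refine Finset.ssubset_iff_subset_ne.mpr ⟨le_sup_left, ?_⟩
      intro h
      have h' : μ = μ ⊔ ν := YoungDiagram.ext h
      exact hnle2 (by rw [h']; exact le_sup_right)
    have hinf_lt : (μ ⊓ ν).card < n := by
      rw [← hμ]
      apply Finset.card_lt_card
      refine Finset.ssubset_iff_subset_ne.mpr ⟨inf_le_left, ?_⟩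
      intro h
      have : μ ⊓ ν = μ := YoungDiagram.ext h
      exact hnle1 (this ▸ inf_le_right)
    by_cases hs : (μ ⊔ ν).card = n + 1
    · have hinfcard : (μ ⊓ ν).card + 1 = n := by omega
      have h1 : up μ ∩ up ν = {μ ⊔ ν} := by
        ext lam
        simp only [Finset.mem_inter, mem_up, Finset.mem_singleton, hμ, hν]
        constructor
        · rintro ⟨⟨ha1, ha2⟩, ⟨hb1, _⟩⟩
          have hle : μ ⊔ ν ≤ lam := sup_le ha1 hb1
          exact (eq_of_le_of_card_le hle (by omega)).symm
        · rintro rfl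
          exact ⟨⟨le_sup_left, hs⟩, le_sup_right, hs⟩
      have h2 : down μ ∩ down ν = {μ ⊓ ν} := by
        ext κ
        simp only [Finset.mem_inter, mem_down, Finset.mem_singleton, hμ, hν]
        constructor
        · rintro ⟨⟨ha1, ha2⟩, ⟨hb1, _⟩⟩
          have hle : κ ≤ μ ⊓ ν := le_inf ha1 hb1
          exact eq_of_le_of_card_le hle (by omega)
        · rintro rfl
          exact ⟨⟨inf_le_left, hinfcard⟩, inf_le_right, by omega⟩
      rw [h1, h2]
      simp
    · have h1 : up μ ∩ up ν = ∅ := by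
        rw [Finset.eq_empty_iff_forall_notMem]
        intro lam hlam
        obtain ⟨ha, hb⟩ := Finset.mem_inter.mp hlam
        obtain ⟨ha1, ha2⟩ := mem_up.mp ha
        obtain ⟨hb1, _⟩ := mem_up.mp hb
        have hle : μ ⊔ ν ≤ lam := sup_le ha1 hb1
        have : (μ ⊔ ν).card ≤ lam.card := Finset.card_le_card hle
        omega
      have h2 : down μ ∩ down ν = ∅ := by
        rw [Finset.eq_empty_iff_forall_notMem]
        intro κ hκ
        obtain ⟨ha, hb⟩ := Finset.mem_inter.mp hκ
        obtain ⟨ha1, ha2⟩ := mem_down.mp ha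
        obtain ⟨hb1, _⟩ := mem_down.mp hb
        have hle : κ ≤ μ ⊓ ν := le_inf ha1 hb1
        have : κ.card ≤ (μ ⊓ ν).card := Finset.card_le_card hle
        omega
      rw [h1, h2]
      simp
end SYTAux
namespace SYTAux
open Finset

lemma f_card_zero {μ : YoungDiagram} (h : μ.card = 0) : f μ = 1 := by
  have hcells : μ.cells = ∅ := Finset.card_eq_zero.mp h
  have hsyt : IsSYT μ (fun _ => 0) := by
    refine ⟨?_, fun _ _ => rfl, ?_, ?_⟩
    · rw [hcells, h]
      have : Set.Icc (1:ℕ) 0 = ∅ := Set.Icc_eq_empty (by omega)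
      rw [this]
      simp only [Finset.coe_empty]
      exact Set.bijOn_empty (fun _ : ℕ × ℕ => (0:ℕ))
    · intro i j j' h1
      rw [hcells] at h1
      simp at h1
    · intro i i' j h1
      rw [hcells] at h1
      simp at h1
  have : Unique {T : ℕ × ℕ → ℕ // IsSYT μ T} := by
    refine ⟨⟨⟨fun _ => 0, hsyt⟩⟩, ?_⟩
    rintro ⟨T, hT⟩
    apply Subtype.ext
    funext x
    exact hT.2.1 x (by rw [hcells]; simp)
  rw [f, Nat.card_unique]

theorem upsum : ∀ (n : ℕ) (μ : YoungDiagram), μ.card = n →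
    ∑ lam ∈ up μ, f lam = (n + 1) * f μ := by
  intro n
  induction n using Nat.strong_induction_on with
  | _ n IH =>
  intro μ hμ
  have step1 : ∑ lam ∈ up μ, f lam = ∑ lam ∈ up μ, ∑ ν ∈ down lam, f ν := by
    refine Finset.sum_congr rfl fun lam hl => ?_
    exact branching lam (by rw [(mem_up.mp hl).2]; omega)
  have step2 : ∑ lam ∈ up μ, ∑ ν ∈ down lam, f ν =
      ∑ ν ∈ allYD n, ∑ _lam ∈ up μ ∩ up ν, f ν := by
    refine Finset.sum_comm' ?_
    intro lam ν
    constructor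
    · rintro ⟨h1, h2⟩
      obtain ⟨hle, hc⟩ := mem_down.mp h2
      have hcl := (mem_up.mp h1).2
      exact ⟨Finset.mem_inter.mpr ⟨h1, mem_down_iff_mem_up.mp h2⟩, mem_allYD.mpr (by omega)⟩
    · rintro ⟨h1, _⟩
      obtain ⟨ha, hb⟩ := Finset.mem_inter.mp h1
      exact ⟨ha, mem_down_iff_mem_up.mpr hb⟩
  have step3 : ∑ ν ∈ allYD n, ∑ _lam ∈ up μ ∩ up ν, f ν =
      ∑ ν ∈ allYD n, ((down μ ∩ down ν).card * f ν + if ν = μ then f ν else 0) := by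
    refine Finset.sum_congr rfl fun ν hν => ?_
    rw [Finset.sum_const, smul_eq_mul, claim_card hμ (mem_allYD.mp hν)]
    split_ifs <;> ring
  have step4 : ∑ ν ∈ allYD n, ((down μ ∩ down ν).card * f ν + if ν = μ then f ν else 0) =
      (∑ ν ∈ allYD n, (down μ ∩ down ν).card * f ν) + f μ := by
    rw [Finset.sum_add_distrib, Finset.sum_ite_eq' (allYD n) μ f, if_pos (mem_allYD.mpr hμ)]
  have key : ∑ ν ∈ allYD n, (down μ ∩ down ν).card * f ν = n * f μ := by
    have k1 : ∑ ν ∈ allYD n, (down μ ∩ down ν).card * f ν =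
        ∑ ν ∈ allYD n, ∑ _κ ∈ down μ ∩ down ν, f ν := by
      refine Finset.sum_congr rfl fun ν hν => ?_
      rw [Finset.sum_const, smul_eq_mul]
    have k2 : ∑ ν ∈ allYD n, ∑ _κ ∈ down μ ∩ down ν, f ν =
        ∑ κ ∈ down μ, ∑ ν ∈ up κ, f ν := by
      refine Finset.sum_comm' ?_
      intro ν κ
      constructor
      · rintro ⟨h1, h2⟩
        obtain ⟨ha, hb⟩ := Finset.mem_inter.mp h2
        exact ⟨mem_down_iff_mem_up.mp hb, ha⟩
      · rintro ⟨h1, h2⟩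
        have hκc : κ.card + 1 = μ.card := (mem_down.mp h2).2
        have hνc : ν.card = κ.card + 1 := (mem_up.mp h1).2
        refine ⟨mem_allYD.mpr (by omega), Finset.mem_inter.mpr ⟨h2, mem_down_iff_mem_up.mpr h1⟩⟩
    have k3 : ∑ κ ∈ down μ, ∑ ν ∈ up κ, f ν = ∑ κ ∈ down μ, n * f κ := by
      refine Finset.sum_congr rfl fun κ hκ => ?_
      have hκc : κ.card + 1 = μ.card := (mem_down.mp hκ).2
      have hlt : κ.card < n := by omega
      rw [IH κ.card hlt κ rfl]
      congr 1
      omega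
    have k4 : ∑ κ ∈ down μ, n * f κ = n * f μ := by
      rw [← Finset.mul_sum]
      rcases Nat.eq_zero_or_pos n with rfl | hpos
      · simp
      · rw [← branching μ (by omega)]
    rw [k1, k2, k3, k4]
  rw [step1, step2, step3, step4, key]
  ring

lemma allYD_zero : allYD 0 = {⊥} := by
  ext μ
  simp only [mem_allYD, Finset.mem_singleton]
  constructor
  · intro h
    apply YoungDiagram.ext
    rw [Finset.card_eq_zero.mp h]
    rfl
  · rintro rfl
    rfl

theorem ssum (n : ℕ) : ∑ lam ∈ allYD n, f lam * f lam = n.factorial := by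
  induction n with
  | zero =>
    rw [allYD_zero, Finset.sum_singleton, f_card_zero (show (⊥ : YoungDiagram).card = 0 from rfl)]
    rfl
  | succ n ih =>
    have step1 : ∑ lam ∈ allYD (n+1), f lam * f lam =
        ∑ lam ∈ allYD (n+1), ∑ ν ∈ down lam, f ν * f lam := by
      refine Finset.sum_congr rfl fun lam hl => ?_
      rw [← Finset.sum_mul, ← branching lam (by rw [mem_allYD.mp hl]; omega)]
    have step2 : ∑ lam ∈ allYD (n+1), ∑ ν ∈ down lam, f ν * f lam =
        ∑ ν ∈ allYD n, ∑ lam ∈ up ν, f ν * f lam := by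
      refine Finset.sum_comm' ?_
      intro lam ν
      constructor
      · rintro ⟨h1, h2⟩
        have hc : ν.card + 1 = lam.card := (mem_down.mp h2).2
        have hl : lam.card = n + 1 := mem_allYD.mp h1
        exact ⟨mem_down_iff_mem_up.mp h2, mem_allYD.mpr (by omega)⟩
      · rintro ⟨h1, h2⟩
        have hν : ν.card = n := mem_allYD.mp h2
        have hc : lam.card = ν.card + 1 := (mem_up.mp h1).2
        exact ⟨mem_allYD.mpr (by omega), mem_down_iff_mem_up.mpr h1⟩
    have step3 : ∑ ν ∈ allYD n, ∑ lam ∈ up ν, f ν * f lam =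
        ∑ ν ∈ allYD n, (n + 1) * (f ν * f ν) := by
      refine Finset.sum_congr rfl fun ν hν => ?_
      rw [← Finset.mul_sum, upsum n ν (mem_allYD.mp hν)]
      ring
    rw [step1, step2, step3, ← Finset.mul_sum, ih]
    rfl
end SYTAux

/-- A consequence of the RSK correspondence: the number of pairs `(P, Q)` of standard
Young tableaux of the same shape `λ ⊢ n`, summed over all `λ`, equals `n!`;
i.e. `∑_{λ ⊢ n} (f^λ)² = n!`. -/
theorem sum_squares_syt_eq_factorial (n : ℕ) :
    Nat.card {x : YoungDiagram × ((ℕ × ℕ → ℕ) × (ℕ × ℕ → ℕ)) //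
        x.1.card = n ∧ IsSYT x.1 x.2.1 ∧ IsSYT x.1 x.2.2} = Nat.factorial n := by
  open SYTAux in
  have e : {x : YoungDiagram × ((ℕ × ℕ → ℕ) × (ℕ × ℕ → ℕ)) //
        x.1.card = n ∧ IsSYT x.1 x.2.1 ∧ IsSYT x.1 x.2.2} ≃
      Σ lam : {lam // lam ∈ SYTAux.allYD n},
        ({T : ℕ × ℕ → ℕ // IsSYT lam.1 T} × {T : ℕ × ℕ → ℕ // IsSYT lam.1 T}) :=
    { toFun := fun x => ⟨⟨x.1.1, SYTAux.mem_allYD.mpr x.2.1⟩, ⟨x.1.2.1, x.2.2.1⟩, ⟨x.1.2.2, x.2.2.2⟩⟩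
      invFun := fun y => ⟨(y.1.1, (y.2.1.1, y.2.2.1)), SYTAux.mem_allYD.mp y.1.2, y.2.1.2, y.2.2.2⟩
      left_inv := fun x => rfl
      right_inv := fun y => rfl }
  rw [Nat.card_congr e]
  letI : ∀ lam : {lam // lam ∈ SYTAux.allYD n},
      Fintype ({T : ℕ × ℕ → ℕ // IsSYT lam.1 T} × {T : ℕ × ℕ → ℕ // IsSYT lam.1 T}) :=
    fun lam => Fintype.ofFinite _
  rw [Nat.card_eq_fintype_card, Fintype.card_sigma]
  have hterm : ∀ lam : {lam // lam ∈ SYTAux.allYD n},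
      Fintype.card ({T : ℕ × ℕ → ℕ // IsSYT lam.1 T} × {T : ℕ × ℕ → ℕ // IsSYT lam.1 T}) =
        SYTAux.f lam.1 * SYTAux.f lam.1 := by
    intro lam
    rw [← Nat.card_eq_fintype_card, Nat.card_prod]
    rfl
  calc ∑ lam : {lam // lam ∈ SYTAux.allYD n},
        Fintype.card ({T : ℕ × ℕ → ℕ // IsSYT lam.1 T} × {T : ℕ × ℕ → ℕ // IsSYT lam.1 T})
      = ∑ lam : {lam // lam ∈ SYTAux.allYD n}, SYTAux.f lam.1 * SYTAux.f lam.1 :=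
        Finset.sum_congr rfl (fun lam _ => hterm lam)
    _ = ∑ lam ∈ SYTAux.allYD n, SYTAux.f lam * SYTAux.f lam :=
        Finset.sum_coe_sort (SYTAux.allYD n) (fun lam => SYTAux.f lam * SYTAux.f lam)
    _ = Nat.factorial n := SYTAux.ssum n
end

section
/- If a finite ranked partially ordered set with 0̂ and 1̂ admits an EL-labeling (is lexicographically shellable), then for every interval [x,y], the Möbius function satisfies (-1)^{rank(y)-rank(x)} μ(x,y) equals the number of maximal chains in [x,y] with strictly decreasing label sequences, and in particular the Möbius function alternates in sign. -/
/-!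
Write `D(x, z)` for the number of maximal chains of `[x, z]` with strictly decreasing labels.
As `D(x, x) = 1`, it suffices to show that `f(x, z) = (-1)^(rk z - rk x) D(x, z)` satisfies the
recursion defining `μ`, i.e. `∑_{z ∈ [x, y]} f(x, z) = 0` for `x < y`. Up to sign, this sum counts
with sign `(-1)^|c|` the saturated chains `c` starting at `x`, ending in `[x, y]`, with strictly
decreasing labels.

Let `s z` be the element covering `z` on the unique increasing maximal chain of `[z, y]`. A chain
`c` ending at `z ≠ y` whose last label exceeds `λ(z, s z)` is extended by `s z`; any other chain
loses its last element `z`, and since `z'` followed by the increasing chain of `[z, y]` is then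
increasing, uniqueness gives `s z' = z` for the new end `z'`. This is a sign-reversing involution
without fixed points, so the signed count vanishes.
-/

/-- `l` is a maximal chain of the interval `[x, y]`: a list of elements starting at `x`,
ending at `y`, in which each element covers the previous one. -/
def IsMaxChain' {P : Type*} [PartialOrder P] (l : List P) (x y : P) : Prop :=
  l.Chain' (· ⋖ ·) ∧ l.head? = some x ∧ l.getLast? = some y

/-- The sequence of edge labels along a chain `l`. -/
def labelSeq {P Λ : Type*} (lab : P → P → Λ) (l : List P) : List Λ :=
  (l.zip l.tail).map fun p => lab p.1 p.2

section

variable {P Λ : Type*}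

section MaxChain

variable [PartialOrder P] {l : List P} {a b x y z : P}

theorem isMaxChain'_iff :
    IsMaxChain' l x y ↔ l.IsChain (· ⋖ ·) ∧ l.head? = some x ∧ l.getLast? = some y :=
  Iff.rfl

theorem isMaxChain'_singleton_iff : IsMaxChain' [a] x y ↔ a = x ∧ a = y := by
  simp [isMaxChain'_iff]

theorem isMaxChain'_cons_cons_iff :
    IsMaxChain' (a :: b :: l) x y ↔ a = x ∧ a ⋖ b ∧ IsMaxChain' (b :: l) b y := by
  simp only [isMaxChain'_iff, List.isChain_cons_cons, List.head?_cons,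
    List.getLast?_cons_cons, Option.some.injEq, true_and]
  tauto

namespace IsMaxChain'

theorem head?_eq (h : IsMaxChain' l x y) : l.head? = some x := h.2.1

theorem getLast?_eq (h : IsMaxChain' l x y) : l.getLast? = some y := h.2.2

theorem exists_eq_cons (h : IsMaxChain' l x y) : ∃ t, l = x :: t :=
  List.head?_eq_some_iff.1 h.head?_eq

theorem le : ∀ {l : List P} {x y : P}, IsMaxChain' l x y → x ≤ y
  | [], _, _, h => by simpa using h.head?_eq
  | [_], _, _, h => by obtain ⟨rfl, rfl⟩ := isMaxChain'_singleton_iff.1 h; rfl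
  | _ :: _ :: _, _, _, h => by
    obtain ⟨rfl, hab, h⟩ := isMaxChain'_cons_cons_iff.1 h
    exact hab.le.trans h.le

theorem eq_singleton_of_self (h : IsMaxChain' l x x) : l = [x] := by
  match l, h with
  | [], h => simpa using h.head?_eq
  | [_], h => rw [(isMaxChain'_singleton_iff.1 h).1]
  | _ :: _ :: _, h =>
    obtain ⟨rfl, hab, h⟩ := isMaxChain'_cons_cons_iff.1 h
    exact absurd h.le hab.lt.not_ge

theorem length_add_rank {rk : P → ℕ} (hrk : ∀ x y : P, x ⋖ y → rk y = rk x + 1) :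
    ∀ {l : List P} {x y : P}, IsMaxChain' l x y → l.length + rk x = rk y + 1
  | [], _, _, h => by simpa using h.head?_eq
  | [_], _, _, h => by obtain ⟨rfl, rfl⟩ := isMaxChain'_singleton_iff.1 h; simp [add_comm]
  | _ :: _ :: _, _, _, h => by
    obtain ⟨rfl, hab, h⟩ := isMaxChain'_cons_cons_iff.1 h
    have := h.length_add_rank hrk
    simp only [List.length_cons] at this ⊢
    rw [hrk _ _ hab] at this
    omega

theorem length_eq {rk : P → ℕ} (hrk : ∀ x y : P, x ⋖ y → rk y = rk x + 1)
    (h : IsMaxChain' l x y) : l.length = rk y - rk x + 1 := by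
  obtain ⟨t, rfl⟩ := h.exists_eq_cons
  have := h.length_add_rank hrk
  grind

theorem cons (h : IsMaxChain' l y z) (hxy : x ⋖ y) : IsMaxChain' (x :: l) x z := by
  obtain ⟨t, rfl⟩ := h.exists_eq_cons
  exact isMaxChain'_cons_cons_iff.2 ⟨rfl, hxy, h⟩

theorem concat (h : IsMaxChain' l x y) (hyz : y ⋖ z) : IsMaxChain' (l ++ [z]) x z := by
  obtain ⟨t, rfl⟩ := h.exists_eq_cons
  refine ⟨h.1.append (List.isChain_singleton z) ?_, rfl, List.getLast?_concat⟩
  simpa [h.getLast?_eq] using hyz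

theorem of_concat (h : IsMaxChain' (l ++ [z]) x y) (hl : l ≠ []) :
    ∃ w, IsMaxChain' l x w ∧ w ⋖ z ∧ z = y := by
  obtain ⟨w, hw⟩ := Option.ne_none_iff_exists'.1 (List.getLast?_eq_none_iff.not.2 hl)
  obtain ⟨hch, hhead, hlast⟩ := isMaxChain'_iff.1 h
  rw [List.isChain_append] at hch
  refine ⟨w, ⟨hch.1, ?_, hw⟩, hch.2.2 w hw z rfl, by simpa using hlast⟩
  rwa [List.head?_append_of_ne_nil _ hl] at hhead

end IsMaxChain'

theorem finite_setOf_isChain_covBy [Finite P] : {l : List P | l.IsChain (· ⋖ ·)}.Finite := by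
  cases nonempty_fintype P
  refine (List.finite_length_le P (Fintype.card P)).subset fun l hl => ?_
  have : l.Pairwise (· < ·) := List.isChain_iff_pairwise.1 (hl.imp fun _ _ h => h.lt)
  exact List.Nodup.length_le_card (this.imp ne_of_lt)

end MaxChain

section Labels

variable (lab : P → P → Λ) {l : List P} {a b z : P}

theorem labelSeq_cons_of_head?_eq (h : l.head? = some b) :
    labelSeq lab (a :: l) = lab a b :: labelSeq lab l := by
  obtain ⟨t, rfl⟩ := List.head?_eq_some_iff.1 h
  rfl

theorem labelSeq_concat (h : l.getLast? = some z) (w : P) :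
    labelSeq lab (l ++ [w]) = labelSeq lab l ++ [lab z w] := by
  induction l generalizing z with
  | nil => simp at h
  | cons a t ih =>
    cases t with
    | nil => simp_all; rfl
    | cons b t =>
      rw [List.getLast?_cons_cons] at h
      simp only [List.cons_append] at ih ⊢
      rw [labelSeq_cons_of_head?_eq lab (l := b :: (t ++ [w])) rfl, ih h,
        labelSeq_cons_of_head?_eq lab (l := b :: t) rfl, List.cons_append]

end Labels

theorem moebius_eq_of_sum_eq_zero {R : Type*} [PartialOrder P] [Finite P] [AddCommGroup R]
    {mu f : P → P → R} (hrefl : ∀ x, f x x = mu x x)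
    (hmu_rec : ∀ x y, x < y → mu x y = -∑ᶠ z ∈ Set.Ico x y, mu x z)
    (hf_sum : ∀ x y, x < y → ∑ᶠ z ∈ Set.Icc x y, f x z = 0)
    {x y : P} (hxy : x ≤ y) : mu x y = f x y := by
  induction y using WellFoundedLT.induction with
  | _ y ih =>
    obtain rfl | hxy := hxy.eq_or_lt
    · exact (hrefl x).symm
    have hsum := hf_sum x y hxy
    rw [← Set.Ico_insert_right hxy.le, finsum_mem_insert _ (by simp) (Set.toFinite _)] at hsum
    rw [hmu_rec x y hxy, finsum_mem_congr rfl fun z hz => ih z hz.2 hz.1]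
    exact neg_eq_of_add_eq_zero_left hsum

namespace ELLabeling

section IncreasingSucc

variable [PartialOrder P] [LinearOrder Λ] (lab : P → P → Λ)

/-- What the involution needs of the map sending `z < y` to the element covering it on the
increasing maximal chain of `[z, y]`. -/
structure IsIncreasingSucc (y : P) (s : P → P) : Prop where
  covBy : ∀ z ≤ y, z ≠ y → z ⋖ s z
  le : ∀ z ≤ y, z ≠ y → s z ≤ y
  lab_le : ∀ z ≤ y, z ≠ y → s z ≠ y → lab z (s z) ≤ lab (s z) (s (s z))
  eq_of_covBy : ∀ z' z, z' ⋖ z → z ≤ y → (z = y ∨ lab z' z ≤ lab z (s z)) → s z' = z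

variable {lab} {y : P} {I : P → List P}

theorem exists_covBy_eq_cons_of_increasing
    (hI : ∀ z ≤ y, IsMaxChain' (I z) z y ∧ (labelSeq lab (I z)).IsChain (· ≤ ·))
    (huniq : ∀ z ≤ y, ∀ l, IsMaxChain' l z y → (labelSeq lab l).IsChain (· ≤ ·) → l = I z)
    {z : P} (hz : z ≤ y) (hzy : z ≠ y) : ∃ w, z ⋖ w ∧ w ≤ y ∧ I z = z :: I w := by
  obtain ⟨hmax, hinc⟩ := hI z hz
  rcases hIz : I z with _ | ⟨a, _ | ⟨w, t⟩⟩ <;> rw [hIz] at hmax hinc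
  · simpa using hmax.head?_eq
  · obtain ⟨rfl, rfl⟩ := isMaxChain'_singleton_iff.1 hmax
    exact absurd rfl hzy
  · obtain ⟨rfl, hzw, hw⟩ := isMaxChain'_cons_cons_iff.1 hmax
    exact ⟨w, hzw, hw.le, by rw [huniq w hw.le _ hw hinc.tail]⟩

theorem exists_isIncreasingSucc
    (h : ∀ z ≤ y, ∃! l, IsMaxChain' l z y ∧ (labelSeq lab l).IsChain (· ≤ ·)) :
    ∃ s, IsIncreasingSucc lab y s := by
  choose! I hI huniq using h
  have huniq' : ∀ z ≤ y, ∀ l, IsMaxChain' l z y → (labelSeq lab l).IsChain (· ≤ ·) → l = I z :=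
    fun z hz l h1 h2 => huniq z hz l ⟨h1, h2⟩
  choose! s hcov hle hcons using
    fun z (hz : z ≤ y) (hzy : z ≠ y) => exists_covBy_eq_cons_of_increasing hI huniq' hz hzy
  have hlabels : ∀ z ≤ y, z ≠ y →
      labelSeq lab (I z) = lab z (s z) :: labelSeq lab (I (s z)) := fun z hz hzy => by
    rw [hcons z hz hzy, labelSeq_cons_of_head?_eq lab (hI _ (hle z hz hzy)).1.head?_eq]
  refine ⟨s, hcov, hle, fun z hz hzy hszy => ?_, fun z' z hz'z hz hcond => ?_⟩
  · have hinc := (hI z hz).2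
    rw [hlabels z hz hzy, hlabels _ (hle z hz hzy) hszy] at hinc
    exact (List.isChain_cons_cons.1 hinc).1
  · have hz'y : z' ≤ y := hz'z.le.trans hz
    have hinc : (labelSeq lab (z' :: I z)).IsChain (· ≤ ·) := by
      rw [labelSeq_cons_of_head?_eq lab (hI z hz).1.head?_eq, List.isChain_cons]
      refine ⟨fun b hb => ?_, (hI z hz).2⟩
      obtain rfl | hzy := eq_or_ne z y
      · simp [(hI z hz).1.eq_singleton_of_self, labelSeq] at hb
      · rw [hlabels z hz hzy, List.head?_cons, Option.mem_some_iff] at hb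
        exact hb ▸ hcond.resolve_left hzy
    have hz' := huniq' z' hz'y _ ((hI z hz).1.cons hz'z) hinc
    have hz'y' : z' ≠ y := (hz'z.lt.trans_le hz).ne
    rw [hcons z' hz'y hz'y', List.cons.injEq] at hz'
    have := (hI z hz).1.head?_eq
    rwa [hz'.2, (hI _ (hle z' hz'y hz'y')).1.head?_eq, Option.some_inj] at this

end IncreasingSucc

section DecreasingChains

variable [PartialOrder P] [LinearOrder Λ] (lab : P → P → Λ)

def decChains (x y : P) : Set (List P) :=
  {l | IsMaxChain' l x y ∧ (labelSeq lab l).IsChain (fun a b => b < a)}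

def decChainsUpTo (x y : P) : Set (List P) :=
  ⋃ z ∈ Set.Icc x y, decChains lab x z

theorem decChains_finite [Finite P] (x y : P) : (decChains lab x y).Finite :=
  finite_setOf_isChain_covBy.subset fun _ hl => hl.1.1

theorem decChains_self (x : P) : decChains lab x x = {[x]} := by
  ext l
  refine ⟨fun hl => hl.1.eq_singleton_of_self, ?_⟩
  rintro rfl
  exact ⟨isMaxChain'_singleton_iff.2 ⟨rfl, rfl⟩, List.isChain_nil⟩

variable {lab}

theorem mem_decChains_concat_iff {c : List P} {x v w : P} (hc : c ≠ []) :
    c ++ [w] ∈ decChains lab x v ↔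
      ∃ z, c ∈ decChains lab x z ∧ z ⋖ w ∧ w = v ∧
        ∀ a ∈ (labelSeq lab c).getLast?, lab z w < a := by
  have hdec : ∀ z, c.getLast? = some z →
      ((labelSeq lab (c ++ [w])).IsChain (fun a b => b < a) ↔
        (labelSeq lab c).IsChain (fun a b => b < a) ∧
          ∀ a ∈ (labelSeq lab c).getLast?, lab z w < a) :=
    fun z hz => by simp [labelSeq_concat lab hz, List.isChain_append]
  constructor
  · rintro ⟨hcw, hlab⟩
    obtain ⟨z, hmax, hzw, rfl⟩ := hcw.of_concat hc
    obtain ⟨hlab, hlt⟩ := (hdec z hmax.getLast?_eq).1 hlab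
    exact ⟨z, ⟨hmax, hlab⟩, hzw, rfl, hlt⟩
  · rintro ⟨z, ⟨hmax, hlab⟩, hzw, rfl, hlt⟩
    exact ⟨hmax.concat hzw, (hdec z hmax.getLast?_eq).2 ⟨hlab, hlt⟩⟩

variable (lab) (s : P → P) (y : P)

def CanExtend (c : List P) : Prop :=
  ∃ z, c.getLast? = some z ∧ z ≠ y ∧ ∀ a ∈ (labelSeq lab c).getLast?, lab z (s z) < a

-- `(c.getLast?.map s).toList` is `[s z]` when `c` ends at `z`.
open Classical in
noncomputable def toggleLast (c : List P) : List P :=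
  if CanExtend lab s y c then c ++ (c.getLast?.map s).toList else c.dropLast

variable {lab s y} {x z : P} {c : List P}

theorem toggleLast_of_canExtend (hs : IsIncreasingSucc lab y s) (hc : c ∈ decChains lab x z)
    (hz : z ≤ y) (hext : CanExtend lab s y c) :
    c ++ [s z] ∈ decChains lab x (s z) ∧ s z ≤ y ∧
      toggleLast lab s y c = c ++ [s z] ∧ toggleLast lab s y (c ++ [s z]) = c := by
  obtain ⟨z', hlast, hzy, hlt⟩ := hext
  obtain rfl : z' = z := Option.some_inj.1 (hlast.symm.trans hc.1.getLast?_eq)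
  have hcne : c ≠ [] := by rintro rfl; simp at hlast
  have hnext : ¬ CanExtend lab s y (c ++ [s z']) := by
    rintro ⟨w, hw, hwy, hlt'⟩
    obtain rfl : s z' = w := by simpa using hw
    have := hlt' (lab z' (s z')) (by simp [labelSeq_concat lab hlast])
    exact (hs.lab_le z' hz hzy hwy).not_gt this
  refine ⟨(mem_decChains_concat_iff hcne).2 ⟨z', hc, hs.covBy z' hz hzy, rfl, hlt⟩,
    hs.le z' hz hzy, ?_, ?_⟩
  · rw [toggleLast, if_pos ⟨z', hlast, hzy, hlt⟩, hlast]
    rfl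
  · rw [toggleLast, if_neg hnext, List.dropLast_concat]

theorem exists_eq_concat_canExtend (hs : IsIncreasingSucc lab y s) (hxy : x ≠ y)
    (hc : c ∈ decChains lab x z) (hz : z ≤ y) (hnext : ¬ CanExtend lab s y c) :
    ∃ d z', c = d ++ [z] ∧ d ∈ decChains lab x z' ∧ z' ≤ y ∧ CanExtend lab s y d ∧
      s z' = z := by
  obtain rfl | ⟨d, w, rfl⟩ := c.eq_nil_or_concat'
  · simpa using hc.1.head?_eq
  obtain rfl | hd := eq_or_ne d []
  · obtain ⟨rfl, rfl⟩ := isMaxChain'_singleton_iff.1 hc.1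
    exact absurd ⟨w, rfl, hxy, by simp [labelSeq]⟩ hnext
  obtain ⟨z', hd', hz'w, rfl, hlt⟩ := (mem_decChains_concat_iff hd).1 hc
  have hlast : (labelSeq lab (d ++ [w])).getLast? = some (lab z' w) := by
    simp [labelSeq_concat lab hd'.1.getLast?_eq]
  have hsz' : s z' = w := by
    refine hs.eq_of_covBy z' w hz'w hz (or_iff_not_imp_left.2 fun hwy => ?_)
    by_contra hgt
    exact hnext ⟨w, by simp, hwy, by simpa [hlast] using not_le.1 hgt⟩
  have hz'y : z' ≠ y := (hz'w.lt.trans_le hz).ne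
  exact ⟨d, z', rfl, hd', hz'w.le.trans hz, ⟨z', hd'.1.getLast?_eq, hz'y, hsz' ▸ hlt⟩, hsz'⟩

theorem exists_toggleLast_pair (hs : IsIncreasingSucc lab y s) (hxy : x ≠ y)
    (hc : c ∈ decChainsUpTo lab x y) :
    ∃ d w, d ∈ decChainsUpTo lab x y ∧ d ++ [w] ∈ decChainsUpTo lab x y ∧
      toggleLast lab s y d = d ++ [w] ∧ toggleLast lab s y (d ++ [w]) = d ∧
      (c = d ∨ c = d ++ [w]) := by
  simp only [decChainsUpTo, Set.mem_iUnion, Set.mem_Icc, exists_prop] at hc ⊢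
  obtain ⟨z, ⟨hxz, hzy⟩, hc⟩ := hc
  by_cases hext : CanExtend lab s y c
  · obtain ⟨hc', hszy, h1, h2⟩ := toggleLast_of_canExtend hs hc hzy hext
    exact ⟨c, s z, ⟨z, ⟨hxz, hzy⟩, hc⟩, ⟨s z, ⟨hc'.1.le, hszy⟩, hc'⟩, h1, h2, .inl rfl⟩
  · obtain ⟨d, z', rfl, hd, hz'y, hdext, rfl⟩ := exists_eq_concat_canExtend hs hxy hc hzy hext
    obtain ⟨-, -, h1, h2⟩ := toggleLast_of_canExtend hs hd hz'y hdext
    exact ⟨d, s z', ⟨z', ⟨hd.1.le, hz'y⟩, hd⟩, ⟨s z', ⟨hxz, hzy⟩, hc⟩, h1, h2, .inr rfl⟩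

theorem finsum_decChainsUpTo_neg_one_pow_length [Finite P] (hs : IsIncreasingSucc lab y s)
    (hxy : x ≠ y) : ∑ᶠ c ∈ decChainsUpTo lab x y, (-1 : ℤ) ^ c.length = 0 := by
  have hfin : (decChainsUpTo lab x y).Finite :=
    (Set.toFinite _).biUnion fun z _ => decChains_finite lab x z
  rw [finsum_mem_eq_finite_toFinset_sum _ hfin]
  refine Finset.sum_involution (fun c _ => toggleLast lab s y c) ?_ ?_ ?_ ?_ <;>
    intro c hc <;>
    obtain ⟨d, w, hd, hdw, h1, h2, rfl | rfl⟩ :=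
      exists_toggleLast_pair hs hxy ((Set.Finite.mem_toFinset _).1 hc)
  all_goals simp_all [pow_succ]

theorem finsum_decChains_neg_one_pow_length [Finite P] {rk : P → ℕ}
    (hrk : ∀ x y : P, x ⋖ y → rk y = rk x + 1) :
    ∑ᶠ c ∈ decChains lab x z, (-1 : ℤ) ^ c.length =
      -((-1) ^ (rk z - rk x) * Nat.card (decChains lab x z)) := by
  have hlen : ∀ c ∈ decChains lab x z, (-1 : ℤ) ^ c.length = -(-1) ^ (rk z - rk x) :=
    fun c hc => by rw [hc.1.length_eq hrk, pow_succ, mul_neg_one]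
  rw [finsum_mem_congr rfl hlen, finsum_mem_eq_finite_toFinset_sum _ (decChains_finite lab x z),
    Finset.sum_const, Nat.card_eq_card_finite_toFinset (decChains_finite lab x z)]
  simp [mul_comm]

theorem finsum_Icc_signed_card_decChains [Finite P] (hs : IsIncreasingSucc lab y s)
    {rk : P → ℕ} (hrk : ∀ x y : P, x ⋖ y → rk y = rk x + 1) (hxy : x ≠ y) :
    ∑ᶠ z ∈ Set.Icc x y, (-1 : ℤ) ^ (rk z - rk x) * Nat.card (decChains lab x z) = 0 := by
  have hdisj : (Set.Icc x y).PairwiseDisjoint (decChains lab x) := fun z _ z' _ hzz' =>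
    Set.disjoint_left.2 fun c hc hc' =>
      hzz' (Option.some_inj.1 (hc.1.getLast?_eq.symm.trans hc'.1.getLast?_eq))
  have h := finsum_decChainsUpTo_neg_one_pow_length hs hxy
  rwa [decChainsUpTo, finsum_mem_biUnion hdisj (Set.toFinite _) fun z _ => decChains_finite lab x z,
    finsum_mem_congr rfl fun z _ => finsum_decChains_neg_one_pow_length hrk,
    finsum_mem_neg_distrib _ (Set.toFinite _), neg_eq_zero] at h

end DecreasingChains

end ELLabeling

end

theorem el_labeling_mobius_general
    {P : Type*} [PartialOrder P] [Fintype P]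
    (rk : P → ℕ)
    (hrk_cov : ∀ x y : P, x ⋖ y → rk y = rk x + 1)
    {Λ : Type*} [LinearOrder Λ] (lab : P → P → Λ)
    (hEL : ∀ x y : P, x ≤ y → ∃ l : List P,
      (IsMaxChain' l x y ∧ (labelSeq lab l).Chain' (· ≤ ·)) ∧
      (∀ l' : List P, IsMaxChain' l' x y → (labelSeq lab l').Chain' (· ≤ ·) → l' = l) ∧
      (∀ l' : List P, IsMaxChain' l' x y → l' ≠ l →
        List.Lex (· < ·) (labelSeq lab l) (labelSeq lab l')))
    (mu : P → P → ℤ)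
    (hmu_refl : ∀ x, mu x x = 1)
    (hmu_rec : ∀ x y, x < y → mu x y = -∑ᶠ z ∈ {z : P | x ≤ z ∧ z < y}, mu x z) :
    ∀ x y : P, x ≤ y →
      (-1 : ℤ) ^ (rk y - rk x) * mu x y =
        (Nat.card {l : List P // IsMaxChain' l x y ∧
          (labelSeq lab l).Chain' (fun a b => b < a)} : ℤ) ∧
      0 ≤ (-1 : ℤ) ^ (rk y - rk x) * mu x y := by
  intro x y hxy
  have hmu : mu x y = (-1) ^ (rk y - rk x) * Nat.card (ELLabeling.decChains lab x y) := by
    refine moebius_eq_of_sum_eq_zero (f := fun x y => (-1 : ℤ) ^ (rk y - rk x) *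
      Nat.card (ELLabeling.decChains lab x y)) (fun x => ?_) hmu_rec (fun x y hxy => ?_) hxy
    · simp [ELLabeling.decChains_self, hmu_refl]
    · obtain ⟨s, hs⟩ := ELLabeling.exists_isIncreasingSucc fun z (hz : z ≤ y) => by
        obtain ⟨l, hl, huniq, -⟩ := hEL z y hz
        exact ⟨l, hl, fun l' hl' => huniq l' hl'.1 hl'.2⟩
      exact ELLabeling.finsum_Icc_signed_card_decChains hs hrk_cov hxy.ne
  rw [hmu, ← mul_assoc, ← pow_add, Even.neg_one_pow ⟨_, rfl⟩, one_mul]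
  exact ⟨rfl, by positivity⟩

/-- If a finite graded bounded poset admits an EL-labeling (is lexicographically
shellable), then for every interval `[x, y]` the quantity
`(-1)^(rk y - rk x) μ(x, y)` equals the number of maximal chains of `[x, y]` with
strictly decreasing label sequence; in particular the Möbius function alternates
in sign. -/
theorem el_labeling_mobius
    {P : Type*} [PartialOrder P] [BoundedOrder P] [Fintype P]
    (rk : P → ℕ) (hrk_bot : rk ⊥ = 0)
    (hrk_cov : ∀ x y : P, x ⋖ y → rk y = rk x + 1)
    {Λ : Type*} [LinearOrder Λ] (lab : P → P → Λ)
    (hEL : ∀ x y : P, x ≤ y → ∃ l : List P,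
      (IsMaxChain' l x y ∧ (labelSeq lab l).Chain' (· ≤ ·)) ∧
      (∀ l' : List P, IsMaxChain' l' x y → (labelSeq lab l').Chain' (· ≤ ·) → l' = l) ∧
      (∀ l' : List P, IsMaxChain' l' x y → l' ≠ l →
        List.Lex (· < ·) (labelSeq lab l) (labelSeq lab l')))
    (mu : P → P → ℤ)
    (hmu_refl : ∀ x, mu x x = 1)
    (hmu_rec : ∀ x y, x < y → mu x y = -∑ᶠ z ∈ {z : P | x ≤ z ∧ z < y}, mu x z) :
    ∀ x y : P, x ≤ y →
      (-1 : ℤ) ^ (rk y - rk x) * mu x y =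
        (Nat.card {l : List P // IsMaxChain' l x y ∧
          (labelSeq lab l).Chain' (fun a b => b < a)} : ℤ) ∧
      0 ≤ (-1 : ℤ) ^ (rk y - rk x) * mu x y :=
  el_labeling_mobius_general rk hrk_cov lab hEL mu hmu_refl hmu_rec
end

section
/- The largest eigenvalue of the adjacency matrix of a finite graph G is at least the average degree of G and at most the maximum degree of G; consequently the chromatic number of G is at most 1 plus the largest adjacency eigenvalue. -/
/-!
The adjacency matrix is real symmetric, so every eigenvalue is at most `λ` exactly when
`A ≤ λ • 1` in the Loewner order, i.e. `xᵀ A x ≤ λ ‖x‖²` for all `x`. Testing this on the all-ones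
vector gives the average degree bound, and Gershgorin's circle theorem gives `λ ≤ Δ`. For
Wilf's bound `χ ≤ λ + 1`: if `G` is not `k`-colourable, greedy colouring along a degeneracy
order fails, so some nonempty vertex set `s` induces a subgraph of minimum degree at least `k`;
testing the quadratic form on the indicator vector of `s` then gives `k ≤ λ`.
-/

open scoped Matrix MatrixOrder
open Finset Module.End

namespace Matrix

variable {n : Type*} [Fintype n] [DecidableEq n]

theorem mem_spectrum_iff_exists_mulVec_eq_smul {K : Type*} [Field K] {A : Matrix n n K} {μ : K} :
    μ ∈ spectrum K A ↔ ∃ x : n → K, x ≠ 0 ∧ A *ᵥ x = μ • x := by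
  rw [← spectrum_toLin', ← hasEigenvalue_iff_mem_spectrum]
  refine ⟨fun hμ => ?_, fun ⟨x, hx0, hx⟩ => hasEigenvalue_of_hasEigenvector ⟨?_, hx0⟩⟩
  · obtain ⟨x, hx, hx0⟩ := hμ.exists_hasEigenvector
    exact ⟨x, hx0, by simpa using mem_eigenspace_iff.mp hx⟩
  · simpa [mem_eigenspace_iff] using hx

theorem IsHermitian.dotProduct_mulVec_le_of_spectrum_le {A : Matrix n n ℝ} (hA : A.IsHermitian)
    {c : ℝ} (hc : ∀ μ ∈ spectrum ℝ A, μ ≤ c) (x : n → ℝ) :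
    x ⬝ᵥ (A *ᵥ x) ≤ c * (x ⬝ᵥ x) := by
  have hle : A ≤ algebraMap ℝ (Matrix n n ℝ) c := le_algebraMap_of_spectrum_le hc hA
  have := (le_iff.mp hle).dotProduct_mulVec_nonneg x
  simp only [star_trivial, Algebra.algebraMap_eq_smul_one, sub_mulVec, smul_mulVec, one_mulVec,
    dotProduct_sub, dotProduct_smul, smul_eq_mul, sub_nonneg] at this
  linarith

end Matrix

namespace SimpleGraph

variable {V : Type*} [Fintype V] [DecidableEq V] (G : SimpleGraph V) [DecidableRel G.Adj]

theorem abs_le_maxDegree_of_mem_spectrum {μ : ℝ} (hμ : μ ∈ spectrum ℝ (G.adjMatrix ℝ)) :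
    |μ| ≤ G.maxDegree := by
  rw [← Matrix.spectrum_toLin', ← hasEigenvalue_iff_mem_spectrum] at hμ
  obtain ⟨v, hv⟩ := eigenvalue_mem_ball hμ
  have hrow : ∑ w ∈ univ.erase v, ‖G.adjMatrix ℝ v w‖ = G.degree v := by
    rw [Finset.sum_erase _ (by simp)]
    simp [adjMatrix_apply, apply_ite, ← card_neighborFinset_eq_degree, neighborFinset_eq_filter]
  rw [Metric.mem_closedBall, hrow] at hv
  simpa using hv.trans (by exact_mod_cast G.degree_le_maxDegree v)

theorem indicator_dotProduct_adjMatrix_mulVec {R : Type*} [NonAssocSemiring R] (s : Finset V) :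
    (fun v => if v ∈ s then 1 else 0 : V → R) ⬝ᵥ
        (G.adjMatrix R *ᵥ fun v => if v ∈ s then 1 else 0) =
      ∑ v ∈ s, (#(G.neighborFinset v ∩ s) : R) := by
  simp [dotProduct, adjMatrix_mulVec_apply, Finset.sum_ite_mem]

theorem colorable_of_forall_exists_card_neighborFinset_inter_lt {k : ℕ}
    (h : ∀ s : Finset V, s.Nonempty → ∃ v ∈ s, #(G.neighborFinset v ∩ s) < k) : G.Colorable k := by
  -- Colours in `ℕ` rather than `Fin k`, so that `∅` is coloured even when `k = 0`.
  suffices ∀ s : Finset V, ∃ f : V → ℕ, (∀ v ∈ s, f v < k) ∧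
      ∀ a ∈ s, ∀ b ∈ s, G.Adj a b → f a ≠ f b by
    obtain ⟨f, hfk, hf⟩ := this univ
    exact ⟨Coloring.mk (fun v => ⟨f v, hfk v (mem_univ v)⟩) fun hab =>
      by simpa [Fin.ext_iff] using hf _ (mem_univ _) _ (mem_univ _) hab⟩
  intro s
  induction s using Finset.strongInduction with
  | H s ih =>
  rcases s.eq_empty_or_nonempty with rfl | hs
  · exact ⟨0, by simp, by simp⟩
  obtain ⟨v, hv, hlt⟩ := h s hs
  obtain ⟨f, hfk, hf⟩ := ih (s.erase v) (erase_ssubset hv)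
  obtain ⟨c, hck, hc⟩ : ∃ c ∈ range k, c ∉ (G.neighborFinset v ∩ s).image f :=
    exists_mem_notMem_of_card_lt_card (card_image_le.trans_lt (by simpa using hlt))
  have hfresh : ∀ b ∈ s, G.Adj v b → c ≠ f b := fun b hb hvb hcb =>
    hc (mem_image.mpr ⟨b, mem_inter.mpr ⟨(G.mem_neighborFinset v b).mpr hvb, hb⟩, hcb.symm⟩)
  refine ⟨Function.update f v c, fun u hu => ?_, fun a ha b hb hab => ?_⟩
  · rcases eq_or_ne u v with rfl | huv
    · simpa using mem_range.mp hck
    · simpa [huv] using hfk u (mem_erase.mpr ⟨huv, hu⟩)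
  by_cases hav : a = v <;> by_cases hbv : b = v
  · exact absurd (hav ▸ hbv ▸ hab) G.irrefl
  · subst hav
    simpa [hbv] using hfresh b hb hab
  · subst hbv
    simpa [hav] using (hfresh a ha hab.symm).symm
  · simpa [hav, hbv] using hf a (mem_erase.mpr ⟨hav, ha⟩) b (mem_erase.mpr ⟨hbv, hb⟩) hab

theorem natCast_le_of_not_colorable {c : ℝ}
    (hc : ∀ x : V → ℝ, x ⬝ᵥ (G.adjMatrix ℝ *ᵥ x) ≤ c * (x ⬝ᵥ x)) {k : ℕ} (hk : ¬G.Colorable k) :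
    (k : ℝ) ≤ c := by
  obtain ⟨s, hs, hdeg⟩ : ∃ s : Finset V, s.Nonempty ∧ ∀ v ∈ s, k ≤ #(G.neighborFinset v ∩ s) := by
    by_contra! h
    exact hk (G.colorable_of_forall_exists_card_neighborFinset_inter_lt h)
  have hquad := hc fun v => if v ∈ s then 1 else 0
  rw [indicator_dotProduct_adjMatrix_mulVec] at hquad
  have hsum : #s • (k : ℝ) ≤ ∑ v ∈ s, (#(G.neighborFinset v ∩ s) : ℝ) :=
    card_nsmul_le_sum _ _ _ fun v hv => by exact_mod_cast hdeg v hv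
  have hcard : (0 : ℝ) < #s := by exact_mod_cast hs.card_pos
  simp only [dotProduct, mul_ite, mul_one, mul_zero, sum_ite_mem, univ_inter, inter_self,
    sum_const, nsmul_eq_mul] at hquad hsum
  nlinarith

end SimpleGraph

/-- The largest adjacency eigenvalue of a finite graph is at least the average degree
and at most the maximum degree; consequently the chromatic number is at most one plus
the largest adjacency eigenvalue. -/
theorem adjacency_eigenvalue_bounds
    {V : Type*} [Fintype V] [DecidableEq V] [Nonempty V]
    (G : SimpleGraph V) [DecidableRel G.Adj]
    (lammax : ℝ)
    (h_ev : ∃ x : V → ℝ, x ≠ 0 ∧ (G.adjMatrix ℝ).mulVec x = lammax • x)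
    (h_max : ∀ μ : ℝ, (∃ x : V → ℝ, x ≠ 0 ∧ (G.adjMatrix ℝ).mulVec x = μ • x) →
      μ ≤ lammax)
    (χ : ℕ) (hχ : G.chromaticNumber = χ) :
    (∑ v : V, (G.degree v : ℝ)) / (Fintype.card V : ℝ) ≤ lammax ∧
    lammax ≤ (G.maxDegree : ℝ) ∧
    (χ : ℝ) ≤ lammax + 1 := by
  have hquad : ∀ x : V → ℝ, x ⬝ᵥ (G.adjMatrix ℝ *ᵥ x) ≤ lammax * (x ⬝ᵥ x) :=
    (G.isHermitian_adjMatrix ℝ).dotProduct_mulVec_le_of_spectrum_le fun μ hμ =>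
      h_max μ (Matrix.mem_spectrum_iff_exists_mulVec_eq_smul.mp hμ)
  refine ⟨?_, ?_, ?_⟩
  · rw [div_le_iff₀ (by exact_mod_cast Fintype.card_pos)]
    simpa [one_dotProduct, mul_comm] using hquad 1
  · exact (le_abs_self _).trans
      (G.abs_le_maxDegree_of_mem_spectrum (Matrix.mem_spectrum_iff_exists_mulVec_eq_smul.mpr h_ev))
  · obtain ⟨k, rfl⟩ : ∃ k, χ = k + 1 :=
      Nat.exists_eq_succ_of_ne_zero fun hχ0 => by
        simp [hχ0, SimpleGraph.chromaticNumber_eq_zero_iff] at hχ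
    have hk : ¬G.Colorable k := fun h => by
      have := hχ ▸ h.chromaticNumber_le
      norm_cast at this
      omega
    push_cast
    linarith [G.natCast_le_of_not_colorable hquad hk]
end
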